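/- arXiv:1403.6087 — 5 statements merged into one kernel-verified Lean document; each statement's English description precedes it below -/
import Mathlib

section
/- Let c₁, c₂, d₁, d₂ be integers. There exist integers a, b satisfying 2a = d₁ − c₁, 2b = (d₁ − d₂) − (c₁ − c₂), and a² + b² + c₁·a + (c₁ − c₂)·b = 0 if and only if c₁ ≡ d₁ (mod 2), c₂ ≡ d₂ (mod 2), and c₁² + (c₁ − c₂)² = d₁² + (d₁ − d₂)². -/
theorem stmt_2 (c₁ c₂ d₁ d₂ : ℤ) :
    (∃ a b : ℤ, 2 * a = d₁ - c₁ ∧ 2 * b = (d₁ - d₂) - (c₁ - c₂) ∧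
      a ^ 2 + b ^ 2 + c₁ * a + (c₁ - c₂) * b = 0) ↔
    (c₁ ≡ d₁ [ZMOD 2] ∧ c₂ ≡ d₂ [ZMOD 2] ∧
      c₁ ^ 2 + (c₁ - c₂) ^ 2 = d₁ ^ 2 + (d₁ - d₂) ^ 2) := by
  constructor
  · rintro ⟨a, b, ha, hb, h⟩
    refine ⟨Int.modEq_iff_dvd.mpr ⟨a, by linarith⟩,
      Int.modEq_iff_dvd.mpr ⟨a - b, by linarith⟩, by linear_combination -4 * h + (d₁ + c₁ + 2*a) * ha + (d₁ - d₂ + c₁ - c₂ + 2*b) * hb⟩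
  · rintro ⟨h1, h2, h3⟩
    obtain ⟨a, ha⟩ := Int.modEq_iff_dvd.mp h1
    obtain ⟨e, he⟩ := Int.modEq_iff_dvd.mp h2
    have hd1 : d₁ = c₁ + 2 * a := by linarith
    have hd2 : d₂ = c₂ + 2 * e := by linarith
    subst hd1 hd2
    refine ⟨a, a - e, by ring, by ring, ?_⟩
    have h4 : 4 * (a ^ 2 + (a - e) ^ 2 + c₁ * a + (c₁ - c₂) * (a - e)) = 0 := by
      linear_combination -h3
    linarith [h4]
end

section
/- Let a, b, c, d, e, f be integers satisfying the three equations: −2a² − b² + 2ab = 2(−2d² − e² + 2de), −2a² − c² + 2ac = 2(−2d² − f² + 2df), and −2b² − c² + 2bc = 2(−2e² − f² + 2ef). Then a, b, and c are all even. -/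
lemma key4 : ∀ x y z u v w : ZMod 4,
    (-2 * x ^ 2 - y ^ 2 + 2 * x * y = 2 * (-2 * u ^ 2 - v ^ 2 + 2 * u * v)) →
    (-2 * x ^ 2 - z ^ 2 + 2 * x * z = 2 * (-2 * u ^ 2 - w ^ 2 + 2 * u * w)) →
    (-2 * y ^ 2 - z ^ 2 + 2 * y * z = 2 * (-2 * v ^ 2 - w ^ 2 + 2 * v * w)) →
    (x = 0 ∨ x = 2) ∧ (y = 0 ∨ y = 2) ∧ (z = 0 ∨ z = 2) := by decide

lemma even_of_zmod4 (a : ℤ) (h : (a : ZMod 4) = 0 ∨ (a : ZMod 4) = 2) : Even a := by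
  rcases h with h | h
  · have : (4 : ℤ) ∣ a := by
      exact_mod_cast (ZMod.intCast_zmod_eq_zero_iff_dvd a 4).mp h
    obtain ⟨k, hk⟩ := this
    exact ⟨2 * k, by omega⟩
  · have : (4 : ℤ) ∣ (a - 2) := by
      have : ((a - 2 : ℤ) : ZMod 4) = 0 := by push_cast; rw [h]; ring
      exact_mod_cast (ZMod.intCast_zmod_eq_zero_iff_dvd (a - 2) 4).mp this
    obtain ⟨k, hk⟩ := this
    exact ⟨2 * k + 1, by omega⟩

theorem stmt_3 (a b c d e f : ℤ)
    (h1 : -2 * a ^ 2 - b ^ 2 + 2 * a * b = 2 * (-2 * d ^ 2 - e ^ 2 + 2 * d * e))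
    (h2 : -2 * a ^ 2 - c ^ 2 + 2 * a * c = 2 * (-2 * d ^ 2 - f ^ 2 + 2 * d * f))
    (h3 : -2 * b ^ 2 - c ^ 2 + 2 * b * c = 2 * (-2 * e ^ 2 - f ^ 2 + 2 * e * f)) :
    Even a ∧ Even b ∧ Even c := by
  have H1 : (-2 * (a : ZMod 4) ^ 2 - (b : ZMod 4) ^ 2 + 2 * (a : ZMod 4) * (b : ZMod 4)
      = 2 * (-2 * (d : ZMod 4) ^ 2 - (e : ZMod 4) ^ 2 + 2 * (d : ZMod 4) * (e : ZMod 4))) := by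
    exact_mod_cast congrArg (Int.cast : ℤ → ZMod 4) h1
  have H2 : (-2 * (a : ZMod 4) ^ 2 - (c : ZMod 4) ^ 2 + 2 * (a : ZMod 4) * (c : ZMod 4)
      = 2 * (-2 * (d : ZMod 4) ^ 2 - (f : ZMod 4) ^ 2 + 2 * (d : ZMod 4) * (f : ZMod 4))) := by
    exact_mod_cast congrArg (Int.cast : ℤ → ZMod 4) h2
  have H3 : (-2 * (b : ZMod 4) ^ 2 - (c : ZMod 4) ^ 2 + 2 * (b : ZMod 4) * (c : ZMod 4)
      = 2 * (-2 * (e : ZMod 4) ^ 2 - (f : ZMod 4) ^ 2 + 2 * (e : ZMod 4) * (f : ZMod 4))) := by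
    exact_mod_cast congrArg (Int.cast : ℤ → ZMod 4) h3
  obtain ⟨ha, hb, hc⟩ := key4 _ _ _ _ _ _ H1 H2 H3
  exact ⟨even_of_zmod4 a ha, even_of_zmod4 b hb, even_of_zmod4 c hc⟩
end

section
/- For all integers c₁, c₂, the graded ring R = ℤ[u,v,w]/(u(u+2v), v(u+v), w(c₁u+c₂v+w)), where u, v, w have degree 2, is a free ℤ-module of rank 8, with degree-0 component of rank 1, degree-2 component of rank 3, degree-4 component of rank 3, degree-6 component of rank 1, and all components of degree greater than 6 equal to zero. -/
set_option maxHeartbeats 1000000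


open MvPolynomial

/-- The ideal of relations of the cohomology ring of the first-family biquotient
`R_{c₁,c₂}`: generated by `u(u+2v)`, `v(u+v)`, `w(c₁u+c₂v+w)`. -/
noncomputable def relIdeal (c₁ c₂ : ℤ) : Ideal (MvPolynomial (Fin 3) ℤ) :=
  Ideal.span
    { X 0 * (X 0 + 2 * X 1),
      X 1 * (X 0 + X 1),
      X 2 * (C c₁ * X 0 + C c₂ * X 1 + X 2) }

/-- The degree-`2d` graded component of the quotient ring: the image of the homogeneous
polynomials of degree `d` (the generators `u,v,w` have cohomological degree `2`). -/
noncomputable def gradedComp (c₁ c₂ : ℤ) (d : ℕ) :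
    Submodule ℤ (MvPolynomial (Fin 3) ℤ ⧸ relIdeal c₁ c₂) :=
  (homogeneousSubmodule (Fin 3) ℤ d).map
    (Ideal.Quotient.mkₐ ℤ (relIdeal c₁ c₂)).toLinearMap


namespace Stmt9

/-! ### A model ring: `ℤ⁸` with explicit structure constants -/

def mulF (c₁ c₂ : ℤ) (x y : Fin 8 → ℤ) : Fin 8 → ℤ := fun i =>
  if i = 0 then x 0*y 0
  else if i = 1 then x 0*y 1 + x 1*y 0
  else if i = 2 then x 0*y 2 + x 2*y 0
  else if i = 3 then x 0*y 3 + x 3*y 0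
  else if i = 4 then x 0*y 4 + x 4*y 0 - 2*(x 1*y 1) + (x 1*y 2 + x 2*y 1) - x 2*y 2
  else if i = 5 then x 0*y 5 + x 5*y 0 + x 1*y 3 + x 3*y 1 - c₁*(x 3*y 3)
  else if i = 6 then x 0*y 6 + x 6*y 0 + x 2*y 3 + x 3*y 2 - c₂*(x 3*y 3)
  else x 0*y 7 + x 7*y 0 + x 1*y 6 + x 6*y 1 + x 2*y 5 + x 5*y 2 + x 3*y 4 + x 4*y 3
      - 2*(x 1*y 5 + x 5*y 1) - (x 2*y 6 + x 6*y 2) + (2*c₁-c₂)*(x 3*y 5 + x 5*y 3)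
      + (c₂-c₁)*(x 3*y 6 + x 6*y 3)

def sgl (k : Fin 8) : Fin 8 → ℤ := fun i => if i = k then 1 else 0

@[ext]
structure V8 (c₁ c₂ : ℤ) where
  f : Fin 8 → ℤ

namespace V8

variable {c₁ c₂ : ℤ}

instance : Add (V8 c₁ c₂) := ⟨fun a b => ⟨a.f + b.f⟩⟩
instance : Neg (V8 c₁ c₂) := ⟨fun a => ⟨-a.f⟩⟩
instance : Zero (V8 c₁ c₂) := ⟨⟨0⟩⟩
instance : Mul (V8 c₁ c₂) := ⟨fun a b => ⟨mulF c₁ c₂ a.f b.f⟩⟩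
instance : One (V8 c₁ c₂) := ⟨⟨sgl 0⟩⟩

lemma add_f (a b : V8 c₁ c₂) : (a + b).f = a.f + b.f := rfl
lemma neg_f (a : V8 c₁ c₂) : (-a).f = -a.f := rfl
lemma zero_f : (0 : V8 c₁ c₂).f = 0 := rfl
lemma mul_f (a b : V8 c₁ c₂) : (a * b).f = mulF c₁ c₂ a.f b.f := rfl
lemma one_f : (1 : V8 c₁ c₂).f = sgl 0 := rfl

instance : SMul ℕ (V8 c₁ c₂) := ⟨fun n a => ⟨n • a.f⟩⟩
instance : SMul ℤ (V8 c₁ c₂) := ⟨fun n a => ⟨n • a.f⟩⟩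
instance : Sub (V8 c₁ c₂) := ⟨fun a b => ⟨a.f - b.f⟩⟩

lemma injective_f : Function.Injective (V8.f (c₁ := c₁) (c₂ := c₂)) := by
  intro a b h; cases a; cases b; simpa using h

instance : AddCommGroup (V8 c₁ c₂) :=
  Function.Injective.addCommGroup V8.f injective_f rfl (fun _ _ => rfl)
    (fun _ => rfl) (fun _ _ => rfl) (fun _ _ => rfl) (fun _ _ => rfl)

lemma mulF_assoc (a b c : Fin 8 → ℤ) :
    mulF c₁ c₂ (mulF c₁ c₂ a b) c = mulF c₁ c₂ a (mulF c₁ c₂ b c) := by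
  funext i; fin_cases i <;> simp [mulF] <;> ring

lemma mulF_comm (a b : Fin 8 → ℤ) : mulF c₁ c₂ a b = mulF c₁ c₂ b a := by
  funext i; fin_cases i <;> simp [mulF] <;> ring

lemma mulF_one (a : Fin 8 → ℤ) : mulF c₁ c₂ (sgl 0) a = a := by
  funext i; fin_cases i <;> simp [mulF, sgl]

lemma mulF_add (a b c : Fin 8 → ℤ) :
    mulF c₁ c₂ a (b + c) = mulF c₁ c₂ a b + mulF c₁ c₂ a c := by
  funext i; fin_cases i <;> simp [mulF] <;> ring

lemma mulF_zero (a : Fin 8 → ℤ) : mulF c₁ c₂ a 0 = 0 := by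
  funext i; fin_cases i <;> simp [mulF]

instance : CommRing (V8 c₁ c₂) :=
  { (inferInstance : AddCommGroup (V8 c₁ c₂)) with
    mul := (· * ·)
    one := 1
    mul_assoc := fun a b c => by ext1; exact mulF_assoc a.f b.f c.f
    one_mul := fun a => by ext1; exact mulF_one a.f
    mul_one := fun a => by
      ext1; exact (mulF_comm a.f (sgl 0)).trans (mulF_one a.f)
    left_distrib := fun a b c => by ext1; exact mulF_add a.f b.f c.f
    right_distrib := fun a b c => by
      ext1
      show mulF c₁ c₂ (a.f + b.f) c.f = mulF c₁ c₂ a.f c.f + mulF c₁ c₂ b.f c.f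
      rw [mulF_comm _ c.f, mulF_add, mulF_comm c.f a.f, mulF_comm c.f b.f]
    zero_mul := fun a => by
      ext1; exact (mulF_comm 0 a.f).trans (mulF_zero a.f)
    mul_zero := fun a => by ext1; exact mulF_zero a.f
    mul_comm := fun a b => by ext1; exact mulF_comm a.f b.f
    natCast := fun n => ⟨fun i => if i = 0 then (n : ℤ) else 0⟩
    natCast_zero := by ext1; funext i; simp [zero_f]
    natCast_succ := fun n => by
      ext1; funext i; by_cases h : i = 0 <;> simp [add_f, one_f, sgl, h]
    intCast := fun n => ⟨fun i => if i = 0 then (n : ℤ) else 0⟩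
    intCast_ofNat := fun n => rfl
    intCast_negSucc := fun n => by
      ext1; funext i
      show (if i = 0 then (Int.negSucc n : ℤ) else 0)
          = -(if i = 0 then ((n + 1 : ℕ) : ℤ) else 0)
      by_cases h : i = 0 <;> simp [h, Int.negSucc_eq] <;> push_cast <;> ring }

lemma intCast_f (n : ℤ) : (n : V8 c₁ c₂).f = fun i => if i = 0 then (n : ℤ) else 0 := rfl

end V8

section Rep

variable (c₁ c₂ : ℤ)

open V8

def uV : V8 c₁ c₂ := ⟨sgl 1⟩
def vV : V8 c₁ c₂ := ⟨sgl 2⟩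
def wV : V8 c₁ c₂ := ⟨sgl 3⟩

noncomputable def φA : MvPolynomial (Fin 3) ℤ →ₐ[ℤ] V8 c₁ c₂ :=
  aeval ![uV c₁ c₂, vV c₁ c₂, wV c₁ c₂]

lemma φA_rel1 : φA c₁ c₂ (X 0 * (X 0 + 2 * X 1)) = 0 := by
  have h : φA c₁ c₂ (X 0 * (X 0 + 2 * X 1))
      = uV c₁ c₂ * (uV c₁ c₂ + (vV c₁ c₂ + vV c₁ c₂)) := by
    simp [φA, two_mul]
  rw [h]
  ext1; funext i
  fin_cases i <;> simp [mul_f, add_f, zero_f, mulF, uV, vV, sgl]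

lemma φA_rel2 : φA c₁ c₂ (X 1 * (X 0 + X 1)) = 0 := by
  have h : φA c₁ c₂ (X 1 * (X 0 + X 1))
      = vV c₁ c₂ * (uV c₁ c₂ + vV c₁ c₂) := by
    simp [φA]
  rw [h]
  ext1; funext i
  fin_cases i <;> simp [mul_f, add_f, zero_f, mulF, uV, vV, sgl]

lemma φA_rel3 : φA c₁ c₂ (X 2 * (C c₁ * X 0 + C c₂ * X 1 + X 2)) = 0 := by
  have h : φA c₁ c₂ (X 2 * (C c₁ * X 0 + C c₂ * X 1 + X 2))
      = wV c₁ c₂ * ((c₁ : V8 c₁ c₂) * uV c₁ c₂ + (c₂ : V8 c₁ c₂) * vV c₁ c₂ + wV c₁ c₂) := by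
    simp [φA, algebraMap_int_eq]
  rw [h]
  ext1; funext i
  fin_cases i <;>
    simp [mul_f, add_f, zero_f, mulF, uV, vV, wV, sgl, intCast_f] <;> ring

lemma φA_ker : ∀ a ∈ relIdeal c₁ c₂, φA c₁ c₂ a = 0 := by
  intro a ha
  have hle : relIdeal c₁ c₂ ≤ RingHom.ker (φA c₁ c₂).toRingHom := by
    rw [relIdeal, Ideal.span_le]
    rintro p (rfl | rfl | rfl)
    · exact φA_rel1 c₁ c₂
    · exact φA_rel2 c₁ c₂
    · exact φA_rel3 c₁ c₂
  exact hle ha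

noncomputable def liftA : (MvPolynomial (Fin 3) ℤ ⧸ relIdeal c₁ c₂) →ₐ[ℤ] V8 c₁ c₂ :=
  Ideal.Quotient.liftₐ (relIdeal c₁ c₂) (φA c₁ c₂) (φA_ker c₁ c₂)

def fV : V8 c₁ c₂ →ₗ[ℤ] (Fin 8 → ℤ) where
  toFun := V8.f
  map_add' _ _ := rfl
  map_smul' _ _ := rfl

noncomputable def L : (MvPolynomial (Fin 3) ℤ ⧸ relIdeal c₁ c₂) →ₗ[ℤ] (Fin 8 → ℤ) :=
  (fV c₁ c₂).comp (liftA c₁ c₂).toLinearMap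

/-- polynomial lifts of the eight basis monomials -/
noncomputable def pp : Fin 8 → MvPolynomial (Fin 3) ℤ := fun k =>
  if k = 0 then 1 else if k = 1 then X 0 else if k = 2 then X 1
  else if k = 3 then X 2 else if k = 4 then X 0 * X 1 else if k = 5 then X 0 * X 2
  else if k = 6 then X 1 * X 2 else X 0 * X 1 * X 2

noncomputable def pfam : Fin 8 → (MvPolynomial (Fin 3) ℤ ⧸ relIdeal c₁ c₂) :=
  fun k => Ideal.Quotient.mk (relIdeal c₁ c₂) (pp k)

lemma L_mk (p : MvPolynomial (Fin 3) ℤ) :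
    L c₁ c₂ (Ideal.Quotient.mk (relIdeal c₁ c₂) p) = (φA c₁ c₂ p).f := by
  simp [L, liftA, fV, Ideal.Quotient.liftₐ_apply]; rfl

lemma L_pfam (k : Fin 8) : L c₁ c₂ (pfam c₁ c₂ k) = sgl k := by
  fin_cases k <;>
    · rw [pfam, L_mk]
      funext i
      fin_cases i <;>
        simp [pp, φA, mul_f, one_f, mulF, uV, vV, wV, sgl]

end Rep

section Quot

variable (c₁ c₂ : ℤ)

noncomputable def xq : MvPolynomial (Fin 3) ℤ ⧸ relIdeal c₁ c₂ :=
  Ideal.Quotient.mk _ (X 0)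
noncomputable def yq : MvPolynomial (Fin 3) ℤ ⧸ relIdeal c₁ c₂ :=
  Ideal.Quotient.mk _ (X 1)
noncomputable def zq : MvPolynomial (Fin 3) ℤ ⧸ relIdeal c₁ c₂ :=
  Ideal.Quotient.mk _ (X 2)

lemma mkC (t : ℤ) :
    Ideal.Quotient.mk (relIdeal c₁ c₂) (C t)
      = (t : MvPolynomial (Fin 3) ℤ ⧸ relIdeal c₁ c₂) :=
  eq_intCast ((Ideal.Quotient.mk (relIdeal c₁ c₂)).comp
    (C : ℤ →+* MvPolynomial (Fin 3) ℤ)) t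

lemma r1 : xq c₁ c₂ * (xq c₁ c₂ + 2 * yq c₁ c₂) = 0 := by
  have h : (X 0 * (X 0 + 2 * X 1) : MvPolynomial (Fin 3) ℤ) ∈ relIdeal c₁ c₂ :=
    Ideal.subset_span (Set.mem_insert _ _)
  have h0 := Ideal.Quotient.eq_zero_iff_mem.mpr h
  have h2 : Ideal.Quotient.mk (relIdeal c₁ c₂) (2 : MvPolynomial (Fin 3) ℤ) = 2 := map_ofNat _ 2
  simpa [xq, yq, h2] using h0

lemma r2 : yq c₁ c₂ * (xq c₁ c₂ + yq c₁ c₂) = 0 := by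
  have h : (X 1 * (X 0 + X 1) : MvPolynomial (Fin 3) ℤ) ∈ relIdeal c₁ c₂ :=
    Ideal.subset_span (Set.mem_insert_of_mem _ (Set.mem_insert _ _))
  have h0 := Ideal.Quotient.eq_zero_iff_mem.mpr h
  simpa [xq, yq] using h0

lemma r3 : zq c₁ c₂ * ((c₁ : MvPolynomial (Fin 3) ℤ ⧸ relIdeal c₁ c₂) * xq c₁ c₂
    + (c₂ : MvPolynomial (Fin 3) ℤ ⧸ relIdeal c₁ c₂) * yq c₁ c₂ + zq c₁ c₂) = 0 := by
  have h : (X 2 * (C c₁ * X 0 + C c₂ * X 1 + X 2) : MvPolynomial (Fin 3) ℤ)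
      ∈ relIdeal c₁ c₂ :=
    Ideal.subset_span (Set.mem_insert_of_mem _ (Set.mem_insert_of_mem _ rfl))
  have h0 := Ideal.Quotient.eq_zero_iff_mem.mpr h
  simpa [xq, yq, zq, mkC] using h0

lemma i4 : xq c₁ c₂ * (xq c₁ c₂ * yq c₁ c₂) = 0 := by
  linear_combination (-(yq c₁ c₂)) * r1 c₁ c₂ + (2 * xq c₁ c₂) * r2 c₁ c₂

lemma i5 : yq c₁ c₂ * (xq c₁ c₂ * yq c₁ c₂) = 0 := by
  linear_combination (yq c₁ c₂) * r1 c₁ c₂ - (xq c₁ c₂) * r2 c₁ c₂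

lemma i6 : xq c₁ c₂ * (xq c₁ c₂ * zq c₁ c₂) = -2 * (xq c₁ c₂ * yq c₁ c₂ * zq c₁ c₂) := by
  linear_combination (zq c₁ c₂) * r1 c₁ c₂

lemma i7 : yq c₁ c₂ * (yq c₁ c₂ * zq c₁ c₂) = -(xq c₁ c₂ * yq c₁ c₂ * zq c₁ c₂) := by
  linear_combination (zq c₁ c₂) * r2 c₁ c₂

lemma i9 : zq c₁ c₂ * (xq c₁ c₂ * zq c₁ c₂)
    = (2 * (c₁ : MvPolynomial (Fin 3) ℤ ⧸ relIdeal c₁ c₂)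
        - (c₂ : MvPolynomial (Fin 3) ℤ ⧸ relIdeal c₁ c₂))
      * (xq c₁ c₂ * yq c₁ c₂ * zq c₁ c₂) := by
  linear_combination (xq c₁ c₂) * r3 c₁ c₂
    - ((c₁ : MvPolynomial (Fin 3) ℤ ⧸ relIdeal c₁ c₂)) * (zq c₁ c₂) * r1 c₁ c₂

lemma i10 : zq c₁ c₂ * (yq c₁ c₂ * zq c₁ c₂)
    = ((c₂ : MvPolynomial (Fin 3) ℤ ⧸ relIdeal c₁ c₂)
        - (c₁ : MvPolynomial (Fin 3) ℤ ⧸ relIdeal c₁ c₂))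
      * (xq c₁ c₂ * yq c₁ c₂ * zq c₁ c₂) := by
  linear_combination (yq c₁ c₂) * r3 c₁ c₂
    - ((c₂ : MvPolynomial (Fin 3) ℤ ⧸ relIdeal c₁ c₂)) * (zq c₁ c₂) * r2 c₁ c₂

lemma i11 : xq c₁ c₂ * (xq c₁ c₂ * yq c₁ c₂ * zq c₁ c₂) = 0 := by
  linear_combination (-(yq c₁ c₂ * zq c₁ c₂)) * r1 c₁ c₂
    + (2 * (xq c₁ c₂ * zq c₁ c₂)) * r2 c₁ c₂

lemma i12 : yq c₁ c₂ * (xq c₁ c₂ * yq c₁ c₂ * zq c₁ c₂) = 0 := by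
  linear_combination (yq c₁ c₂ * zq c₁ c₂) * r1 c₁ c₂
    - (xq c₁ c₂ * zq c₁ c₂) * r2 c₁ c₂

lemma i13 : zq c₁ c₂ * (xq c₁ c₂ * yq c₁ c₂ * zq c₁ c₂) = 0 := by
  linear_combination (xq c₁ c₂ * yq c₁ c₂) * r3 c₁ c₂
    - ((c₁ : MvPolynomial (Fin 3) ℤ ⧸ relIdeal c₁ c₂))
      * ((-(yq c₁ c₂ * zq c₁ c₂)) * r1 c₁ c₂ + (2 * (xq c₁ c₂ * zq c₁ c₂)) * r2 c₁ c₂)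
    - ((c₂ : MvPolynomial (Fin 3) ℤ ⧸ relIdeal c₁ c₂))
      * ((yq c₁ c₂ * zq c₁ c₂) * r1 c₁ c₂ - (xq c₁ c₂ * zq c₁ c₂) * r2 c₁ c₂)

lemma i14 : xq c₁ c₂ * (xq c₁ c₂ * xq c₁ c₂) = 0 := by
  linear_combination (xq c₁ c₂) * r1 c₁ c₂ - 2 * i4 c₁ c₂

lemma i15 : yq c₁ c₂ * (yq c₁ c₂ * yq c₁ c₂) = 0 := by
  linear_combination (yq c₁ c₂) * r2 c₁ c₂ - i5 c₁ c₂

lemma i16 : zq c₁ c₂ * (zq c₁ c₂ * zq c₁ c₂)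
    = (-2 * (c₁ : MvPolynomial (Fin 3) ℤ ⧸ relIdeal c₁ c₂) ^ 2
        + 2 * (c₁ : MvPolynomial (Fin 3) ℤ ⧸ relIdeal c₁ c₂)
            * (c₂ : MvPolynomial (Fin 3) ℤ ⧸ relIdeal c₁ c₂)
        - (c₂ : MvPolynomial (Fin 3) ℤ ⧸ relIdeal c₁ c₂) ^ 2)
      * (xq c₁ c₂ * yq c₁ c₂ * zq c₁ c₂) := by
  linear_combination (zq c₁ c₂) * r3 c₁ c₂
    - ((c₁ : MvPolynomial (Fin 3) ℤ ⧸ relIdeal c₁ c₂)) * i9 c₁ c₂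
    - ((c₂ : MvPolynomial (Fin 3) ℤ ⧸ relIdeal c₁ c₂)) * i10 c₁ c₂

lemma pfam0 : pfam c₁ c₂ 0 = 1 := by simp [pfam, pp]
lemma pfam1 : pfam c₁ c₂ 1 = xq c₁ c₂ := by simp [pfam, pp, xq]
lemma pfam2 : pfam c₁ c₂ 2 = yq c₁ c₂ := by simp [pfam, pp, yq]
lemma pfam3 : pfam c₁ c₂ 3 = zq c₁ c₂ := by simp [pfam, pp, zq]
lemma pfam4 : pfam c₁ c₂ 4 = xq c₁ c₂ * yq c₁ c₂ := by simp [pfam, pp, xq, yq]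
lemma pfam5 : pfam c₁ c₂ 5 = xq c₁ c₂ * zq c₁ c₂ := by simp [pfam, pp, xq, zq]
lemma pfam6 : pfam c₁ c₂ 6 = yq c₁ c₂ * zq c₁ c₂ := by simp [pfam, pp, yq, zq]
lemma pfam7 : pfam c₁ c₂ 7 = xq c₁ c₂ * yq c₁ c₂ * zq c₁ c₂ := by
  simp [pfam, pp, xq, yq, zq]

end Quot

section Span

variable (c₁ c₂ : ℤ)

local notation "P" => Submodule.span ℤ (Set.range (pfam c₁ c₂))

lemma mem_of_eq {c₁ c₂ : ℤ} {M : Submodule ℤ (MvPolynomial (Fin 3) ℤ ⧸ relIdeal c₁ c₂)} {a b : MvPolynomial (Fin 3) ℤ ⧸ relIdeal c₁ c₂}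
    (h : a = b) (hb : b ∈ M) : a ∈ M :=
  h ▸ hb

lemma memP (k : Fin 8) : pfam c₁ c₂ k ∈ P :=
  Submodule.subset_span ⟨k, rfl⟩


lemma mul_gen_mem (i : Fin 3) (k : Fin 8) :
    Ideal.Quotient.mk (relIdeal c₁ c₂) (X i) * pfam c₁ c₂ k ∈ P := by
  have m4 : xq c₁ c₂ * yq c₁ c₂ ∈ P := pfam4 c₁ c₂ ▸ memP c₁ c₂ 4
  have m5 : xq c₁ c₂ * zq c₁ c₂ ∈ P := pfam5 c₁ c₂ ▸ memP c₁ c₂ 5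
  have m6 : yq c₁ c₂ * zq c₁ c₂ ∈ P := pfam6 c₁ c₂ ▸ memP c₁ c₂ 6
  have m7 : xq c₁ c₂ * yq c₁ c₂ * zq c₁ c₂ ∈ P := pfam7 c₁ c₂ ▸ memP c₁ c₂ 7
  fin_cases i
  · -- X 0, i.e. xq
    show xq c₁ c₂ * pfam c₁ c₂ k ∈ P
    fin_cases k
    · show xq c₁ c₂ * pfam c₁ c₂ (0 : Fin 8) ∈ P
      exact mem_of_eq (by rw [pfam0, mul_one, ← pfam1]) (memP c₁ c₂ 1)
    · show xq c₁ c₂ * pfam c₁ c₂ (1 : Fin 8) ∈ P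
      refine mem_of_eq (b := (-2 : ℤ) • (xq c₁ c₂ * yq c₁ c₂)) ?_
        (Submodule.smul_mem _ _ m4)
      rw [pfam1, zsmul_eq_mul]; push_cast; linear_combination r1 c₁ c₂
    · show xq c₁ c₂ * pfam c₁ c₂ (2 : Fin 8) ∈ P
      exact mem_of_eq (by rw [pfam2]) m4
    · show xq c₁ c₂ * pfam c₁ c₂ (3 : Fin 8) ∈ P
      exact mem_of_eq (by rw [pfam3]) m5
    · show xq c₁ c₂ * pfam c₁ c₂ (4 : Fin 8) ∈ P
      exact mem_of_eq (by rw [pfam4]; exact i4 c₁ c₂) (Submodule.zero_mem _)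
    · show xq c₁ c₂ * pfam c₁ c₂ (5 : Fin 8) ∈ P
      refine mem_of_eq (b := (-2 : ℤ) • (xq c₁ c₂ * yq c₁ c₂ * zq c₁ c₂)) ?_
        (Submodule.smul_mem _ _ m7)
      rw [pfam5, zsmul_eq_mul]; push_cast; linear_combination i6 c₁ c₂
    · show xq c₁ c₂ * pfam c₁ c₂ (6 : Fin 8) ∈ P
      exact mem_of_eq (by rw [pfam6]; ring) m7
    · show xq c₁ c₂ * pfam c₁ c₂ (7 : Fin 8) ∈ P
      exact mem_of_eq (by rw [pfam7]; exact i11 c₁ c₂) (Submodule.zero_mem _)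
  · -- X 1, i.e. yq
    show yq c₁ c₂ * pfam c₁ c₂ k ∈ P
    fin_cases k
    · show yq c₁ c₂ * pfam c₁ c₂ (0 : Fin 8) ∈ P
      exact mem_of_eq (by rw [pfam0, mul_one, ← pfam2]) (memP c₁ c₂ 2)
    · show yq c₁ c₂ * pfam c₁ c₂ (1 : Fin 8) ∈ P
      exact mem_of_eq (by rw [pfam1]; ring) m4
    · show yq c₁ c₂ * pfam c₁ c₂ (2 : Fin 8) ∈ P
      refine mem_of_eq (b := (-1 : ℤ) • (xq c₁ c₂ * yq c₁ c₂)) ?_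
        (Submodule.smul_mem _ _ m4)
      rw [pfam2, zsmul_eq_mul]; push_cast; linear_combination r2 c₁ c₂
    · show yq c₁ c₂ * pfam c₁ c₂ (3 : Fin 8) ∈ P
      exact mem_of_eq (by rw [pfam3]) m6
    · show yq c₁ c₂ * pfam c₁ c₂ (4 : Fin 8) ∈ P
      exact mem_of_eq (by rw [pfam4]; exact i5 c₁ c₂) (Submodule.zero_mem _)
    · show yq c₁ c₂ * pfam c₁ c₂ (5 : Fin 8) ∈ P
      exact mem_of_eq (by rw [pfam5]; ring) m7
    · show yq c₁ c₂ * pfam c₁ c₂ (6 : Fin 8) ∈ P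
      refine mem_of_eq (b := (-1 : ℤ) • (xq c₁ c₂ * yq c₁ c₂ * zq c₁ c₂)) ?_
        (Submodule.smul_mem _ _ m7)
      rw [pfam6, zsmul_eq_mul]; push_cast; linear_combination i7 c₁ c₂
    · show yq c₁ c₂ * pfam c₁ c₂ (7 : Fin 8) ∈ P
      exact mem_of_eq (by rw [pfam7]; exact i12 c₁ c₂) (Submodule.zero_mem _)
  · -- X 2, i.e. zq
    show zq c₁ c₂ * pfam c₁ c₂ k ∈ P
    fin_cases k
    · show zq c₁ c₂ * pfam c₁ c₂ (0 : Fin 8) ∈ P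
      exact mem_of_eq (by rw [pfam0, mul_one, ← pfam3]) (memP c₁ c₂ 3)
    · show zq c₁ c₂ * pfam c₁ c₂ (1 : Fin 8) ∈ P
      exact mem_of_eq (by rw [pfam1]; ring) m5
    · show zq c₁ c₂ * pfam c₁ c₂ (2 : Fin 8) ∈ P
      exact mem_of_eq (by rw [pfam2]; ring) m6
    · show zq c₁ c₂ * pfam c₁ c₂ (3 : Fin 8) ∈ P
      refine mem_of_eq
        (b := (-c₁ : ℤ) • (xq c₁ c₂ * zq c₁ c₂) + (-c₂ : ℤ) • (yq c₁ c₂ * zq c₁ c₂)) ?_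
        (Submodule.add_mem _ (Submodule.smul_mem _ _ m5) (Submodule.smul_mem _ _ m6))
      rw [pfam3, zsmul_eq_mul, zsmul_eq_mul]; push_cast; linear_combination r3 c₁ c₂
    · show zq c₁ c₂ * pfam c₁ c₂ (4 : Fin 8) ∈ P
      exact mem_of_eq (by rw [pfam4]; ring) m7
    · show zq c₁ c₂ * pfam c₁ c₂ (5 : Fin 8) ∈ P
      refine mem_of_eq (b := (2*c₁ - c₂ : ℤ) • (xq c₁ c₂ * yq c₁ c₂ * zq c₁ c₂)) ?_
        (Submodule.smul_mem _ _ m7)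
      rw [pfam5, zsmul_eq_mul]; push_cast; linear_combination i9 c₁ c₂
    · show zq c₁ c₂ * pfam c₁ c₂ (6 : Fin 8) ∈ P
      refine mem_of_eq (b := (c₂ - c₁ : ℤ) • (xq c₁ c₂ * yq c₁ c₂ * zq c₁ c₂)) ?_
        (Submodule.smul_mem _ _ m7)
      rw [pfam6, zsmul_eq_mul]; push_cast; linear_combination i10 c₁ c₂
    · show zq c₁ c₂ * pfam c₁ c₂ (7 : Fin 8) ∈ P
      exact mem_of_eq (by rw [pfam7]; exact i13 c₁ c₂) (Submodule.zero_mem _)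

lemma mulX_mem (i : Fin 3) {a : MvPolynomial (Fin 3) ℤ ⧸ relIdeal c₁ c₂} (ha : a ∈ P) :
    Ideal.Quotient.mk (relIdeal c₁ c₂) (X i) * a ∈ P := by
  induction ha using Submodule.span_induction with
  | mem w hw => obtain ⟨k, rfl⟩ := hw; exact mul_gen_mem c₁ c₂ i k
  | zero => rw [mul_zero]; exact Submodule.zero_mem _
  | add w v hw hv hw' hv' => rw [mul_add]; exact Submodule.add_mem _ hw' hv'
  | smul t w hw hw' => rw [mul_smul_comm]; exact Submodule.smul_mem _ _ hw'

lemma span_top : ⊤ ≤ P := by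
  rintro a -
  obtain ⟨p, rfl⟩ := Ideal.Quotient.mk_surjective a
  induction p using MvPolynomial.induction_on with
  | C t =>
      refine mem_of_eq (b := (t : ℤ) • pfam c₁ c₂ 0) ?_ (Submodule.smul_mem _ _ (memP c₁ c₂ 0))
      rw [pfam0, zsmul_eq_mul, mul_one, mkC]
  | add p q hp hq => rw [map_add]; exact Submodule.add_mem _ hp hq
  | mul_X p i hp => rw [map_mul, mul_comm]; exact mulX_mem c₁ c₂ i hp

lemma pfam_indep : LinearIndependent ℤ (pfam c₁ c₂) := by
  have h2 : LinearIndependent ℤ (fun k => (Pi.single k 1 : Fin 8 → ℤ)) := by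
    have heq : (fun k => (Pi.single k 1 : Fin 8 → ℤ)) = ⇑(Pi.basisFun ℤ (Fin 8)) := by
      funext k; simp
    rw [heq]; exact (Pi.basisFun ℤ (Fin 8)).linearIndependent
  refine LinearIndependent.of_comp (L c₁ c₂) ?_
  have h : (⇑(L c₁ c₂)) ∘ (pfam c₁ c₂) = fun k => (Pi.single k 1 : Fin 8 → ℤ) := by
    funext k
    rw [Function.comp_apply, L_pfam]
    funext i
    simp [sgl, Pi.single_apply, eq_comm]
  rw [h]; exact h2

noncomputable def bA : Module.Basis (Fin 8) ℤ (MvPolynomial (Fin 3) ℤ ⧸ relIdeal c₁ c₂) :=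
  Module.Basis.mk (pfam_indep c₁ c₂) (span_top c₁ c₂)

lemma freeA : Module.Free ℤ (MvPolynomial (Fin 3) ℤ ⧸ relIdeal c₁ c₂) := Module.Free.of_basis (bA c₁ c₂)

lemma finrankA : Module.finrank ℤ (MvPolynomial (Fin 3) ℤ ⧸ relIdeal c₁ c₂) = 8 := by
  rw [Module.finrank_eq_card_basis (bA c₁ c₂), Fintype.card_fin]

end Span

section Graded

variable (c₁ c₂ : ℤ)

local notation "P" => Submodule.span ℤ (Set.range (pfam c₁ c₂))

lemma mk_monomial (v : Fin 3 →₀ ℕ) :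
    Ideal.Quotient.mk (relIdeal c₁ c₂) (monomial v 1)
      = xq c₁ c₂ ^ v 0 * yq c₁ c₂ ^ v 1 * zq c₁ c₂ ^ v 2 := by
  have h : (monomial v (1:ℤ)) = X 0 ^ v 0 * X 1 ^ v 1 * X 2 ^ v 2 := by
    rw [monomial_eq, C_1, one_mul,
      Finsupp.prod_fintype _ _ (fun i => pow_zero _), Fin.prod_univ_three]
  rw [h, map_mul, map_mul, map_pow, map_pow, map_pow]; rfl

lemma graded_le (d : ℕ) (T : Submodule ℤ (MvPolynomial (Fin 3) ℤ ⧸ relIdeal c₁ c₂))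
    (h : ∀ a b c : ℕ, a + b + c = d → xq c₁ c₂ ^ a * yq c₁ c₂ ^ b * zq c₁ c₂ ^ c ∈ T) :
    gradedComp c₁ c₂ d ≤ T := by
  rintro w hw
  simp only [gradedComp, Submodule.mem_map, AlgHom.toLinearMap_apply,
    Ideal.Quotient.mkₐ_eq_mk, mem_homogeneousSubmodule] at hw
  obtain ⟨q, hq, rfl⟩ := hw
  rw [q.as_sum, map_sum]
  refine Submodule.sum_mem _ ?_
  intro v hv
  have hd := hq (MvPolynomial.mem_support_iff.mp hv)
  have hsum : v 0 + v 1 + v 2 = d := by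
    simpa [Finsupp.weight_apply, Finsupp.sum_fintype, Fin.sum_univ_three] using hd
  have hmono : monomial v (coeff v q) = C (coeff v q) * monomial v (1:ℤ) := by
    rw [C_mul_monomial, mul_one]
  rw [hmono, map_mul, mkC, ← zsmul_eq_mul]
  exact Submodule.smul_mem _ _ (mem_of_eq (mk_monomial c₁ c₂ v) (h _ _ _ hsum))

lemma mem_graded (d a b c : ℕ) (h : a + b + c = d) :
    xq c₁ c₂ ^ a * yq c₁ c₂ ^ b * zq c₁ c₂ ^ c ∈ gradedComp c₁ c₂ d := by
  refine Submodule.mem_map.mpr ⟨X 0 ^ a * X 1 ^ b * X 2 ^ c, ?_, ?_⟩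
  · rw [mem_homogeneousSubmodule]
    have h0 : (X (0 : Fin 3) ^ a : MvPolynomial (Fin 3) ℤ).IsHomogeneous a := by
      simpa using (isHomogeneous_X ℤ (0 : Fin 3)).pow a
    have h1 : (X (1 : Fin 3) ^ b : MvPolynomial (Fin 3) ℤ).IsHomogeneous b := by
      simpa using (isHomogeneous_X ℤ (1 : Fin 3)).pow b
    have h2 : (X (2 : Fin 3) ^ c : MvPolynomial (Fin 3) ℤ).IsHomogeneous c := by
      simpa using (isHomogeneous_X ℤ (2 : Fin 3)).pow c
    simpa [h] using (h0.mul h1).mul h2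
  · simp only [AlgHom.toLinearMap_apply, Ideal.Quotient.mkₐ_eq_mk, map_mul, map_pow]
    rfl

lemma hz3 (a b c : ℕ) (h : a + b + c = 3) :
    ∃ k : ℤ, xq c₁ c₂ ^ a * yq c₁ c₂ ^ b * zq c₁ c₂ ^ c
      = (k : MvPolynomial (Fin 3) ℤ ⧸ relIdeal c₁ c₂) * (xq c₁ c₂ * yq c₁ c₂ * zq c₁ c₂) := by
  have ha : a ≤ 3 := by omega
  have hb : b ≤ 3 := by omega
  have hc : c ≤ 3 := by omega
  interval_cases a <;> interval_cases b <;> interval_cases c <;> simp_all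
  · exact ⟨-2*c₁^2 + 2*c₁*c₂ - c₂^2, by push_cast; linear_combination i16 c₁ c₂⟩
  · exact ⟨c₂ - c₁, by push_cast; linear_combination i10 c₁ c₂⟩
  · exact ⟨-1, by push_cast; linear_combination i7 c₁ c₂⟩
  · exact ⟨0, by push_cast; linear_combination i15 c₁ c₂⟩
  · exact ⟨2*c₁ - c₂, by push_cast; linear_combination i9 c₁ c₂⟩
  · exact ⟨1, by push_cast; ring⟩
  · exact ⟨0, by push_cast; linear_combination i5 c₁ c₂⟩
  · exact ⟨-2, by push_cast; linear_combination i6 c₁ c₂⟩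
  · exact ⟨0, by push_cast; linear_combination i4 c₁ c₂⟩
  · exact ⟨0, by push_cast; linear_combination i14 c₁ c₂⟩

lemma hz4 : ∀ n a b c : ℕ, a + b + c = n + 4 →
    xq c₁ c₂ ^ a * yq c₁ c₂ ^ b * zq c₁ c₂ ^ c = 0 := by
  intro n
  induction n with
  | zero =>
    intro a b c h
    rcases (by omega : 1 ≤ a ∨ 1 ≤ b ∨ 1 ≤ c) with ha | hb | hc
    · obtain ⟨a', rfl⟩ : ∃ a', a = a' + 1 := ⟨a - 1, by omega⟩
      obtain ⟨k, hk⟩ := hz3 c₁ c₂ a' b c (by omega)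
      calc xq c₁ c₂ ^ (a'+1) * yq c₁ c₂ ^ b * zq c₁ c₂ ^ c
          = xq c₁ c₂ * (xq c₁ c₂ ^ a' * yq c₁ c₂ ^ b * zq c₁ c₂ ^ c) := by ring
        _ = (k : MvPolynomial (Fin 3) ℤ ⧸ relIdeal c₁ c₂) * (xq c₁ c₂ * (xq c₁ c₂ * yq c₁ c₂ * zq c₁ c₂)) := by rw [hk]; ring
        _ = 0 := by rw [i11]; ring
    · obtain ⟨b', rfl⟩ : ∃ b', b = b' + 1 := ⟨b - 1, by omega⟩
      obtain ⟨k, hk⟩ := hz3 c₁ c₂ a b' c (by omega)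
      calc xq c₁ c₂ ^ a * yq c₁ c₂ ^ (b'+1) * zq c₁ c₂ ^ c
          = yq c₁ c₂ * (xq c₁ c₂ ^ a * yq c₁ c₂ ^ b' * zq c₁ c₂ ^ c) := by ring
        _ = (k : MvPolynomial (Fin 3) ℤ ⧸ relIdeal c₁ c₂) * (yq c₁ c₂ * (xq c₁ c₂ * yq c₁ c₂ * zq c₁ c₂)) := by rw [hk]; ring
        _ = 0 := by rw [i12]; ring
    · obtain ⟨c', rfl⟩ : ∃ c', c = c' + 1 := ⟨c - 1, by omega⟩
      obtain ⟨k, hk⟩ := hz3 c₁ c₂ a b c' (by omega)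
      calc xq c₁ c₂ ^ a * yq c₁ c₂ ^ b * zq c₁ c₂ ^ (c'+1)
          = zq c₁ c₂ * (xq c₁ c₂ ^ a * yq c₁ c₂ ^ b * zq c₁ c₂ ^ c') := by ring
        _ = (k : MvPolynomial (Fin 3) ℤ ⧸ relIdeal c₁ c₂) * (zq c₁ c₂ * (xq c₁ c₂ * yq c₁ c₂ * zq c₁ c₂)) := by rw [hk]; ring
        _ = 0 := by rw [i13]; ring
  | succ n ih =>
    intro a b c h
    rcases (by omega : 1 ≤ a ∨ 1 ≤ b ∨ 1 ≤ c) with ha | hb | hc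
    · obtain ⟨a', rfl⟩ : ∃ a', a = a' + 1 := ⟨a - 1, by omega⟩
      have hk := ih a' b c (by omega)
      calc xq c₁ c₂ ^ (a'+1) * yq c₁ c₂ ^ b * zq c₁ c₂ ^ c
          = xq c₁ c₂ * (xq c₁ c₂ ^ a' * yq c₁ c₂ ^ b * zq c₁ c₂ ^ c) := by ring
        _ = 0 := by rw [hk]; ring
    · obtain ⟨b', rfl⟩ : ∃ b', b = b' + 1 := ⟨b - 1, by omega⟩
      have hk := ih a b' c (by omega)
      calc xq c₁ c₂ ^ a * yq c₁ c₂ ^ (b'+1) * zq c₁ c₂ ^ c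
          = yq c₁ c₂ * (xq c₁ c₂ ^ a * yq c₁ c₂ ^ b' * zq c₁ c₂ ^ c) := by ring
        _ = 0 := by rw [hk]; ring
    · obtain ⟨c', rfl⟩ : ∃ c', c = c' + 1 := ⟨c - 1, by omega⟩
      have hk := ih a b c' (by omega)
      calc xq c₁ c₂ ^ a * yq c₁ c₂ ^ b * zq c₁ c₂ ^ (c'+1)
          = zq c₁ c₂ * (xq c₁ c₂ ^ a * yq c₁ c₂ ^ b * zq c₁ c₂ ^ c') := by ring
        _ = 0 := by rw [hk]; ring

end Graded

section Final

variable (c₁ c₂ : ℤ)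

lemma g0 : gradedComp c₁ c₂ 0
    = Submodule.span ℤ (Set.range (pfam c₁ c₂ ∘ (![0] : Fin 1 → Fin 8))) := by
  apply le_antisymm
  · apply graded_le
    intro a b c h
    obtain rfl : a = 0 := by omega
    obtain rfl : b = 0 := by omega
    obtain rfl : c = 0 := by omega
    refine mem_of_eq (b := pfam c₁ c₂ 0) ?_ (Submodule.subset_span ⟨0, rfl⟩)
    rw [pfam0]; ring
  · rw [Submodule.span_le]
    rintro w ⟨k, rfl⟩
    fin_cases k
    refine mem_of_eq (b := xq c₁ c₂ ^ 0 * yq c₁ c₂ ^ 0 * zq c₁ c₂ ^ 0) ?_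
      (mem_graded c₁ c₂ 0 0 0 0 rfl)
    show pfam c₁ c₂ 0 = _
    rw [pfam0]; ring

lemma g1 : gradedComp c₁ c₂ 1
    = Submodule.span ℤ (Set.range (pfam c₁ c₂ ∘ (![1, 2, 3] : Fin 3 → Fin 8))) := by
  apply le_antisymm
  · apply graded_le
    intro a b c h
    have ha : a ≤ 1 := by omega
    have hb : b ≤ 1 := by omega
    have hc : c ≤ 1 := by omega
    interval_cases a <;> interval_cases b <;> interval_cases c <;> simp_all
    · exact mem_of_eq (b := pfam c₁ c₂ 3) (by rw [pfam3]) (Submodule.subset_span ⟨2, rfl⟩)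
    · exact mem_of_eq (b := pfam c₁ c₂ 2) (by rw [pfam2]) (Submodule.subset_span ⟨1, rfl⟩)
    · exact mem_of_eq (b := pfam c₁ c₂ 1) (by rw [pfam1]) (Submodule.subset_span ⟨0, rfl⟩)
  · rw [Submodule.span_le]
    rintro w ⟨k, rfl⟩
    fin_cases k
    · refine mem_of_eq (b := xq c₁ c₂ ^ 1 * yq c₁ c₂ ^ 0 * zq c₁ c₂ ^ 0) ?_
        (mem_graded c₁ c₂ 1 1 0 0 rfl)
      show pfam c₁ c₂ 1 = _
      rw [pfam1]; ring
    · refine mem_of_eq (b := xq c₁ c₂ ^ 0 * yq c₁ c₂ ^ 1 * zq c₁ c₂ ^ 0) ?_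
        (mem_graded c₁ c₂ 1 0 1 0 rfl)
      show pfam c₁ c₂ 2 = _
      rw [pfam2]; ring
    · refine mem_of_eq (b := xq c₁ c₂ ^ 0 * yq c₁ c₂ ^ 0 * zq c₁ c₂ ^ 1) ?_
        (mem_graded c₁ c₂ 1 0 0 1 rfl)
      show pfam c₁ c₂ 3 = _
      rw [pfam3]; ring

lemma g2 : gradedComp c₁ c₂ 2
    = Submodule.span ℤ (Set.range (pfam c₁ c₂ ∘ (![4, 5, 6] : Fin 3 → Fin 8))) := by
  apply le_antisymm
  · apply graded_le
    intro a b c h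
    have ha : a ≤ 2 := by omega
    have hb : b ≤ 2 := by omega
    have hc : c ≤ 2 := by omega
    interval_cases a <;> interval_cases b <;> interval_cases c <;> simp_all
    · refine mem_of_eq
        (b := (-c₁ : ℤ) • pfam c₁ c₂ 5 + (-c₂ : ℤ) • pfam c₁ c₂ 6) ?_
        (Submodule.add_mem _
          (Submodule.smul_mem _ _ (Submodule.subset_span ⟨1, rfl⟩))
          (Submodule.smul_mem _ _ (Submodule.subset_span ⟨2, rfl⟩)))
      rw [pfam5, pfam6, zsmul_eq_mul, zsmul_eq_mul]; push_cast
      linear_combination r3 c₁ c₂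
    · exact mem_of_eq (b := pfam c₁ c₂ 6) (by rw [pfam6]) (Submodule.subset_span ⟨2, rfl⟩)
    · refine mem_of_eq (b := (-1 : ℤ) • pfam c₁ c₂ 4) ?_
        (Submodule.smul_mem _ _ (Submodule.subset_span ⟨0, rfl⟩))
      rw [pfam4, zsmul_eq_mul]; push_cast; linear_combination r2 c₁ c₂
    · exact mem_of_eq (b := pfam c₁ c₂ 5) (by rw [pfam5]) (Submodule.subset_span ⟨1, rfl⟩)
    · exact mem_of_eq (b := pfam c₁ c₂ 4) (by rw [pfam4]) (Submodule.subset_span ⟨0, rfl⟩)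
    · refine mem_of_eq (b := (-2 : ℤ) • pfam c₁ c₂ 4) ?_
        (Submodule.smul_mem _ _ (Submodule.subset_span ⟨0, rfl⟩))
      rw [pfam4, zsmul_eq_mul]; push_cast; linear_combination r1 c₁ c₂
  · rw [Submodule.span_le]
    rintro w ⟨k, rfl⟩
    fin_cases k
    · refine mem_of_eq (b := xq c₁ c₂ ^ 1 * yq c₁ c₂ ^ 1 * zq c₁ c₂ ^ 0) ?_
        (mem_graded c₁ c₂ 2 1 1 0 rfl)
      show pfam c₁ c₂ 4 = _
      rw [pfam4]; ring
    · refine mem_of_eq (b := xq c₁ c₂ ^ 1 * yq c₁ c₂ ^ 0 * zq c₁ c₂ ^ 1) ?_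
        (mem_graded c₁ c₂ 2 1 0 1 rfl)
      show pfam c₁ c₂ 5 = _
      rw [pfam5]; ring
    · refine mem_of_eq (b := xq c₁ c₂ ^ 0 * yq c₁ c₂ ^ 1 * zq c₁ c₂ ^ 1) ?_
        (mem_graded c₁ c₂ 2 0 1 1 rfl)
      show pfam c₁ c₂ 6 = _
      rw [pfam6]; ring

lemma g3 : gradedComp c₁ c₂ 3
    = Submodule.span ℤ (Set.range (pfam c₁ c₂ ∘ (![7] : Fin 1 → Fin 8))) := by
  apply le_antisymm
  · apply graded_le
    intro a b c h
    obtain ⟨k, hk⟩ := hz3 c₁ c₂ a b c h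
    refine mem_of_eq (b := k • pfam c₁ c₂ 7) ?_
      (Submodule.smul_mem _ _ (Submodule.subset_span ⟨0, rfl⟩))
    rw [pfam7, zsmul_eq_mul, hk]
  · rw [Submodule.span_le]
    rintro w ⟨k, rfl⟩
    fin_cases k
    refine mem_of_eq (b := xq c₁ c₂ ^ 1 * yq c₁ c₂ ^ 1 * zq c₁ c₂ ^ 1) ?_
      (mem_graded c₁ c₂ 3 1 1 1 rfl)
    show pfam c₁ c₂ 7 = _
    rw [pfam7]; ring

lemma gbot (d : ℕ) (hd : 3 < d) : gradedComp c₁ c₂ d = ⊥ := by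
  refine le_antisymm ?_ bot_le
  apply graded_le
  intro a b c h
  rw [Submodule.mem_bot]
  exact hz4 c₁ c₂ (d - 4) a b c (by omega)

lemma finrank_part {m : ℕ} (g : Fin m → Fin 8) (hg : Function.Injective g) :
    Module.finrank ℤ
      (Submodule.span ℤ (Set.range (pfam c₁ c₂ ∘ g))) = m := by
  rw [finrank_span_eq_card ((pfam_indep c₁ c₂).comp g hg), Fintype.card_fin]

end Final

end Stmt9


theorem stmt_9 (c₁ c₂ : ℤ) :
    Module.Free ℤ (MvPolynomial (Fin 3) ℤ ⧸ relIdeal c₁ c₂) ∧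
    Module.finrank ℤ (MvPolynomial (Fin 3) ℤ ⧸ relIdeal c₁ c₂) = 8 ∧
    Module.finrank ℤ (gradedComp c₁ c₂ 0) = 1 ∧
    Module.finrank ℤ (gradedComp c₁ c₂ 1) = 3 ∧
    Module.finrank ℤ (gradedComp c₁ c₂ 2) = 3 ∧
    Module.finrank ℤ (gradedComp c₁ c₂ 3) = 1 ∧
    ∀ d : ℕ, 3 < d → gradedComp c₁ c₂ d = ⊥ := by
  refine ⟨Stmt9.freeA c₁ c₂, Stmt9.finrankA c₁ c₂, ?_, ?_, ?_, ?_,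
    fun d hd => Stmt9.gbot c₁ c₂ d hd⟩
  · rw [Stmt9.g0 c₁ c₂]
    exact Stmt9.finrank_part c₁ c₂ _ (by decide)
  · rw [Stmt9.g1 c₁ c₂]
    exact Stmt9.finrank_part c₁ c₂ _ (by decide)
  · rw [Stmt9.g2 c₁ c₂]
    exact Stmt9.finrank_part c₁ c₂ _ (by decide)
  · rw [Stmt9.g3 c₁ c₂]
    exact Stmt9.finrank_part c₁ c₂ _ (by decide)
end

section
/- Let a₂, a₃, b₁, b₃, c₁, c₂ be integers and define A = [[1,a₂,a₃],[b₁,1,b₃],[c₁,c₂,1]]. Consider the action of T³ = (S¹)³ on (S³)³ ⊂ (ℂ²)³ given by (z₁,z₂,z₃) · ((p₁,q₁),(p₂,q₂),(p₃,q₃)) = ((z₁p₁, z₁z₂^{a₂}z₃^{a₃}q₁), (z₂p₂, z₁^{b₁}z₂z₃^{b₃}q₂), (z₃p₃, z₁^{c₁}z₂^{c₂}z₃q₃)). This action is free if and only if det A = ±1 and each of the three diagonal 2×2 cofactors of A (determinants of the submatrices obtained by deleting the i-th row and i-th column) equals ±1. -/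
noncomputable def ee (N x : ℤ) : ℂ := Complex.exp ((2 * Real.pi * (x / N) : ℝ) * Complex.I)

lemma ee_abs (N x : ℤ) : ‖ee N x‖ = 1 := Complex.norm_exp_ofReal_mul_I _

lemma ee_mul (N x y : ℤ) : ee N x * ee N y = ee N (x + y) := by
  rw [ee, ee, ee, ← Complex.exp_add]
  congr 1
  push_cast
  ring

lemma ee_zpow (N x m : ℤ) : ee N x ^ m = ee N (m * x) := by
  rw [ee, ee, ← Complex.exp_int_mul]
  congr 1
  push_cast
  ring

lemma ee_one (N x : ℤ) (h : N ∣ x) : ee N x = 1 := by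
  obtain ⟨k, rfl⟩ := h
  rcases eq_or_ne N 0 with rfl | hN
  · simp [ee]
  · have hNr : (N : ℝ) ≠ 0 := Int.cast_ne_zero.mpr hN
    rw [ee, Complex.exp_eq_one_iff]
    refine ⟨k, ?_⟩
    have : (2 * Real.pi * ((N * k : ℤ) / N) : ℝ) = k * (2 * Real.pi) := by
      push_cast
      field_simp
    rw [this]
    push_cast
    ring

lemma ee_ne_one (N x : ℤ) (hN : N ≠ 0) (h : ¬ N ∣ x) : ee N x ≠ 1 := by
  intro hx
  rw [ee, Complex.exp_eq_one_iff] at hx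
  obtain ⟨n, hn⟩ := hx
  apply h
  have hNr : (N : ℝ) ≠ 0 := Int.cast_ne_zero.mpr hN
  have h2 : ((2 * Real.pi * (x / N) : ℝ) : ℂ) * Complex.I
      = ((n * (2 * Real.pi) : ℝ) : ℂ) * Complex.I := by
    rw [hn]; push_cast; ring
  have h3 : (2 * Real.pi * (x / N) : ℝ) = (n * (2 * Real.pi) : ℝ) := by
    have := mul_right_cancel₀ Complex.I_ne_zero h2
    exact_mod_cast this
  have h4 : (x : ℝ) = N * n := by
    have hpi : (0:ℝ) < 2 * Real.pi := by positivity
    field_simp at h3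
    nlinarith [h3, Real.pi_pos]
  refine ⟨n, by exact_mod_cast h4⟩

lemma lin2 {M : Type*} [AddCommGroup M] (b c : M) (x y : ℤ)
    (h₁ : b + x • c = 0) (h₂ : y • b + c = 0) : (1 - x*y) • c = 0 := by
  have key : (1 - x*y) • c = (-y) • (b + x • c) + (y • b + c) := by module
  rw [key, h₁, h₂]; simp

lemma lin3 {M : Type*} [AddCommGroup M] (a b c : M) (a₂ a₃ b₁ b₃ c₁ c₂ : ℤ)
    (h₁ : a + a₂ • b + a₃ • c = 0) (h₂ : b₁ • a + b + b₃ • c = 0)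
    (h₃ : c₁ • a + c₂ • b + c = 0) :
    (1 - b₃*c₂ - a₂*b₁ + a₃*b₁*c₂ + a₂*b₃*c₁ - a₃*c₁) • a = 0 := by
  have key : (1 - b₃*c₂ - a₂*b₁ + a₃*b₁*c₂ + a₂*b₃*c₁ - a₃*c₁) • a
      = (1 - b₃*c₂) • (a + a₂ • b + a₃ • c) + (a₃*c₂ - a₂) • (b₁ • a + b + b₃ • c)
        + (a₂*b₃ - a₃) • (c₁ • a + c₂ • b + c) := by module
  rw [key, h₁, h₂, h₃]; simp

lemma solve2 (u v : ℂ) (hu : u ≠ 0) (hv : v ≠ 0) (x y : ℤ)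
    (hm : 1 - x*y = 1 ∨ 1 - x*y = -1)
    (h₁ : u * v ^ x = 1) (h₂ : u ^ y * v = 1) : u = 1 ∧ v = 1 := by
  set U : ℂˣ := Units.mk0 u hu with hU
  set V : ℂˣ := Units.mk0 v hv with hV
  have hU₁ : U * V ^ x = 1 := by
    ext
    push_cast [Units.val_zpow_eq_zpow_val]
    simpa [hU, hV] using h₁
  have hU₂ : U ^ y * V = 1 := by
    ext
    push_cast [Units.val_zpow_eq_zpow_val]
    simpa [hU, hV] using h₂
  have a₁ : Additive.ofMul U + x • Additive.ofMul V = 0 := by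
    have := congrArg Additive.ofMul hU₁
    simpa [ofMul_mul, ofMul_zpow] using this
  have a₂ : y • Additive.ofMul U + Additive.ofMul V = 0 := by
    have := congrArg Additive.ofMul hU₂
    simpa [ofMul_mul, ofMul_zpow] using this
  have key := lin2 (Additive.ofMul U) (Additive.ofMul V) x y a₁ a₂
  have hV0 : Additive.ofMul V = 0 := by
    rcases hm with h | h
    · rw [h, one_smul] at key; exact key
    · rw [h, neg_one_zsmul, neg_eq_zero] at key; exact key
  have hv1 : v = 1 := by
    have hV1 : V = 1 := by
      have := congrArg Additive.toMul hV0
      simpa using this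
    have := congrArg Units.val hV1
    simpa [hV] using this
  refine ⟨?_, hv1⟩
  rw [hv1, one_zpow, mul_one] at h₁
  exact h₁

lemma solve3 (u v w : ℂ) (hu : u ≠ 0) (hv : v ≠ 0) (hw : w ≠ 0)
    (a₂ a₃ b₁ b₃ c₁ c₂ : ℤ)
    (hd : (1 - b₃*c₂ - a₂*b₁ + a₃*b₁*c₂ + a₂*b₃*c₁ - a₃*c₁) = 1 ∨
          (1 - b₃*c₂ - a₂*b₁ + a₃*b₁*c₂ + a₂*b₃*c₁ - a₃*c₁) = -1)
    (hm : 1 - b₃*c₂ = 1 ∨ 1 - b₃*c₂ = -1)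
    (h₁ : u * v ^ a₂ * w ^ a₃ = 1) (h₂ : u ^ b₁ * v * w ^ b₃ = 1)
    (h₃ : u ^ c₁ * v ^ c₂ * w = 1) : u = 1 ∧ v = 1 ∧ w = 1 := by
  set U : ℂˣ := Units.mk0 u hu with hU
  set V : ℂˣ := Units.mk0 v hv with hV
  set W : ℂˣ := Units.mk0 w hw with hW
  have hU₁ : U * V ^ a₂ * W ^ a₃ = 1 := by
    ext; push_cast [Units.val_zpow_eq_zpow_val]; simpa [hU, hV, hW] using h₁
  have hU₂ : U ^ b₁ * V * W ^ b₃ = 1 := by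
    ext; push_cast [Units.val_zpow_eq_zpow_val]; simpa [hU, hV, hW] using h₂
  have hU₃ : U ^ c₁ * V ^ c₂ * W = 1 := by
    ext; push_cast [Units.val_zpow_eq_zpow_val]; simpa [hU, hV, hW] using h₃
  have e₁ : Additive.ofMul U + a₂ • Additive.ofMul V + a₃ • Additive.ofMul W = 0 := by
    have := congrArg Additive.ofMul hU₁; simpa [ofMul_mul, ofMul_zpow] using this
  have e₂ : b₁ • Additive.ofMul U + Additive.ofMul V + b₃ • Additive.ofMul W = 0 := by
    have := congrArg Additive.ofMul hU₂; simpa [ofMul_mul, ofMul_zpow] using this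
  have e₃ : c₁ • Additive.ofMul U + c₂ • Additive.ofMul V + Additive.ofMul W = 0 := by
    have := congrArg Additive.ofMul hU₃; simpa [ofMul_mul, ofMul_zpow] using this
  have key := lin3 _ _ _ a₂ a₃ b₁ b₃ c₁ c₂ e₁ e₂ e₃
  have hU0 : Additive.ofMul U = 0 := by
    rcases hd with h | h
    · rw [h, one_smul] at key; exact key
    · rw [h, neg_one_zsmul, neg_eq_zero] at key; exact key
  have hu1 : u = 1 := by
    have hU1 : U = 1 := by
      have := congrArg Additive.toMul hU0
      simpa using this
    have := congrArg Units.val hU1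
    simpa [hU] using this
  rw [hu1, one_zpow, one_mul] at h₂ h₃
  obtain ⟨h5, h6⟩ := solve2 v w hv hw b₃ c₂ hm h₂ h₃
  exact ⟨hu1, h5, h6⟩

lemma construct2 (b c : ℤ) (h1 : 1 - b*c ≠ 1) (h2 : 1 - b*c ≠ -1) :
    ∃ u v : ℂ, ‖u‖ = 1 ∧ ‖v‖ = 1 ∧ u * v ^ b = 1 ∧ u ^ c * v = 1 ∧
      v ≠ 1 := by
  rcases eq_or_ne (1 - b*c) 0 with h0 | h0
  · refine ⟨ee 4 (-b), ee 4 1, ee_abs _ _, ee_abs _ _, ?_, ?_, ?_⟩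
    · rw [ee_zpow, ee_mul]
      exact ee_one _ _ (by simp)
    · rw [ee_zpow, ee_mul]
      exact ee_one _ _ ⟨0, by linear_combination h0⟩
    · exact ee_ne_one _ _ (by norm_num) (by decide)
  · refine ⟨ee (1-b*c) (-b), ee (1-b*c) 1, ee_abs _ _, ee_abs _ _, ?_, ?_, ?_⟩
    · rw [ee_zpow, ee_mul]
      exact ee_one _ _ (by simp)
    · rw [ee_zpow, ee_mul]
      exact ee_one _ _ ⟨1, by ring⟩
    · refine ee_ne_one _ _ h0 fun hdvd => ?_
      rcases Int.isUnit_iff.mp (isUnit_of_dvd_one hdvd) with h | h <;> simp_all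

lemma construct3 (a₂ a₃ b₁ b₃ c₁ c₂ N : ℤ) (hN0 : N ≠ 0) (hN1 : N ≠ 1) (hN2 : N ≠ -1)
    (hNd : N ∣ (1 - b₃*c₂ - a₂*b₁ + a₃*b₁*c₂ + a₂*b₃*c₁ - a₃*c₁)) :
    ∃ u v w : ℂ, ‖u‖ = 1 ∧ ‖v‖ = 1 ∧ ‖w‖ = 1 ∧
      u * v ^ a₂ * w ^ a₃ = 1 ∧ u ^ b₁ * v * w ^ b₃ = 1 ∧ u ^ c₁ * v ^ c₂ * w = 1 ∧
      ee N (1 - b₃*c₂) = u := by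
  refine ⟨ee N (1 - b₃*c₂), ee N (b₃*c₁ - b₁), ee N (b₁*c₂ - c₁),
    ee_abs _ _, ee_abs _ _, ee_abs _ _, ?_, ?_, ?_, rfl⟩
  · rw [ee_zpow, ee_zpow, ee_mul, ee_mul]
    apply ee_one
    have : (1 - b₃*c₂) + a₂*(b₃*c₁ - b₁) + a₃*(b₁*c₂ - c₁)
        = 1 - b₃*c₂ - a₂*b₁ + a₃*b₁*c₂ + a₂*b₃*c₁ - a₃*c₁ := by ring
    rw [this]; exact hNd
  · rw [ee_zpow, ee_zpow, ee_mul, ee_mul]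
    apply ee_one
    have : b₁*(1 - b₃*c₂) + (b₃*c₁ - b₁) + b₃*(b₁*c₂ - c₁) = 0 := by ring
    rw [this]
    exact dvd_zero N
  · rw [ee_zpow, ee_zpow, ee_mul, ee_mul]
    apply ee_one
    have : c₁*(1 - b₃*c₂) + c₂*(b₃*c₁ - b₁) + (b₁*c₂ - c₁) = 0 := by ring
    rw [this]
    exact dvd_zero N

/-- Totaro's criterion: the `T³` action on `(S³)³` determined by the matrix
`[[1,a₂,a₃],[b₁,1,b₃],[c₁,c₂,1]]` is free iff the determinant and all three diagonal
2×2 cofactors are `±1`. -/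
theorem stmt_12 (a₂ a₃ b₁ b₃ c₁ c₂ : ℤ) :
    (∀ z₁ z₂ z₃ : ℂ, ‖z₁‖ = 1 → ‖z₂‖ = 1 → ‖z₃‖ = 1 →
      ∀ p₁ q₁ p₂ q₂ p₃ q₃ : ℂ,
        ‖p₁‖ ^ 2 + ‖q₁‖ ^ 2 = 1 →
        ‖p₂‖ ^ 2 + ‖q₂‖ ^ 2 = 1 →
        ‖p₃‖ ^ 2 + ‖q₃‖ ^ 2 = 1 →
        (z₁ * p₁ = p₁ ∧ z₁ * z₂ ^ a₂ * z₃ ^ a₃ * q₁ = q₁ ∧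
         z₂ * p₂ = p₂ ∧ z₁ ^ b₁ * z₂ * z₃ ^ b₃ * q₂ = q₂ ∧
         z₃ * p₃ = p₃ ∧ z₁ ^ c₁ * z₂ ^ c₂ * z₃ * q₃ = q₃) →
        z₁ = 1 ∧ z₂ = 1 ∧ z₃ = 1) ↔
    (((!![1, a₂, a₃; b₁, 1, b₃; c₁, c₂, 1] : Matrix (Fin 3) (Fin 3) ℤ).det = 1 ∨
      (!![1, a₂, a₃; b₁, 1, b₃; c₁, c₂, 1] : Matrix (Fin 3) (Fin 3) ℤ).det = -1) ∧
     ∀ i : Fin 3,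
       ((!![1, a₂, a₃; b₁, 1, b₃; c₁, c₂, 1] : Matrix (Fin 3) (Fin 3) ℤ).submatrix
          i.succAbove i.succAbove).det = 1 ∨
       ((!![1, a₂, a₃; b₁, 1, b₃; c₁, c₂, 1] : Matrix (Fin 3) (Fin 3) ℤ).submatrix
          i.succAbove i.succAbove).det = -1) := by
  have hdet : (!![1, a₂, a₃; b₁, 1, b₃; c₁, c₂, 1] : Matrix (Fin 3) (Fin 3) ℤ).det
      = 1 - b₃*c₂ - a₂*b₁ + a₃*b₁*c₂ + a₂*b₃*c₁ - a₃*c₁ := by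
    simp [Matrix.det_fin_three]; ring
  have hsub0 : ((!![1, a₂, a₃; b₁, 1, b₃; c₁, c₂, 1] : Matrix (Fin 3) (Fin 3) ℤ).submatrix
      (0:Fin 3).succAbove (0:Fin 3).succAbove).det = 1 - b₃*c₂ := by
    simp [Matrix.det_fin_two, Fin.succAbove]
  have hsub1 : ((!![1, a₂, a₃; b₁, 1, b₃; c₁, c₂, 1] : Matrix (Fin 3) (Fin 3) ℤ).submatrix
      (1:Fin 3).succAbove (1:Fin 3).succAbove).det = 1 - a₃*c₁ := by
    simp [Matrix.det_fin_two, Fin.succAbove]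
  have hsub2 : ((!![1, a₂, a₃; b₁, 1, b₃; c₁, c₂, 1] : Matrix (Fin 3) (Fin 3) ℤ).submatrix
      (2:Fin 3).succAbove (2:Fin 3).succAbove).det = 1 - a₂*b₁ := by
    simp [Matrix.det_fin_two, Fin.succAbove]
  constructor
  · intro free
    have m0 : 1 - b₃*c₂ = 1 ∨ 1 - b₃*c₂ = -1 := by
      by_contra hcon
      push_neg at hcon
      obtain ⟨u, v, hu, hv, e1, e2, hvne⟩ := construct2 b₃ c₂ hcon.1 hcon.2
      have := free 1 u v (by simp) hu hv 1 0 0 1 0 1 (by simp) (by simp) (by simp)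
        ⟨by simp, by simp, by simp, by simpa using e1, by simp, by simpa using e2⟩
      exact hvne this.2.2
    have m1 : 1 - a₃*c₁ = 1 ∨ 1 - a₃*c₁ = -1 := by
      by_contra hcon
      push_neg at hcon
      obtain ⟨u, v, hu, hv, e1, e2, hvne⟩ := construct2 a₃ c₁ hcon.1 hcon.2
      have := free u 1 v hu (by simp) hv 0 1 1 0 0 1 (by simp) (by simp) (by simp)
        ⟨by simp, by simpa using e1, by simp, by simp, by simp, by simpa using e2⟩
      exact hvne this.2.2
    have m2 : 1 - a₂*b₁ = 1 ∨ 1 - a₂*b₁ = -1 := by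
      by_contra hcon
      push_neg at hcon
      obtain ⟨u, v, hu, hv, e1, e2, hvne⟩ := construct2 a₂ b₁ hcon.1 hcon.2
      have := free u v 1 hu hv (by simp) 0 1 0 1 1 0 (by simp) (by simp) (by simp)
        ⟨by simp, by simpa using e1, by simp, by simpa using e2, by simp, by simp⟩
      exact hvne this.2.1
    refine ⟨?_, ?_⟩
    · rw [hdet]
      by_contra hcon
      push_neg at hcon
      obtain ⟨N, hN0, hN1, hN2, hNd⟩ : ∃ N : ℤ, N ≠ 0 ∧ N ≠ 1 ∧ N ≠ -1 ∧
          N ∣ (1 - b₃*c₂ - a₂*b₁ + a₃*b₁*c₂ + a₂*b₃*c₁ - a₃*c₁) := by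
        rcases eq_or_ne (1 - b₃*c₂ - a₂*b₁ + a₃*b₁*c₂ + a₂*b₃*c₁ - a₃*c₁) 0 with h | h
        · exact ⟨2, by norm_num, by norm_num, by norm_num, h ▸ dvd_zero 2⟩
        · exact ⟨_, h, hcon.1, hcon.2, dvd_refl _⟩
      obtain ⟨u, v, w, hu, hv, hw, e1, e2, e3, hue⟩ :=
        construct3 a₂ a₃ b₁ b₃ c₁ c₂ N hN0 hN1 hN2 hNd
      have hfix := free u v w hu hv hw 0 1 0 1 0 1 (by simp) (by simp) (by simp)
        ⟨by simp, by simpa using e1, by simp, by simpa using e2, by simp, by simpa using e3⟩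
      have hune : u ≠ 1 := by
        rw [← hue]
        refine ee_ne_one _ _ hN0 fun hdvd => ?_
        have : IsUnit N := by
          rcases m0 with h | h <;> rw [h] at hdvd
          · exact isUnit_of_dvd_one hdvd
          · exact isUnit_of_dvd_unit hdvd ⟨⟨-1, -1, by norm_num, by norm_num⟩, rfl⟩
        rcases Int.isUnit_iff.mp this with h | h
        · exact hN1 h
        · exact hN2 h
      exact hune hfix.1
    · intro i
      fin_cases i
      · exact hsub0 ▸ m0
      · exact hsub1 ▸ m1
      · exact hsub2 ▸ m2
  · rintro ⟨hd, hmin⟩ z₁ z₂ z₃ hz₁ hz₂ hz₃ p₁ q₁ p₂ q₂ p₃ q₃ hs₁ hs₂ hs₃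
      ⟨E1, E2, E3, E4, E5, E6⟩
    rw [hdet] at hd
    have m0 := hmin 0; rw [hsub0] at m0
    have m1 := hmin 1; rw [hsub1] at m1
    have m2 := hmin 2; rw [hsub2] at m2
    have hz₁0 : z₁ ≠ 0 := fun h => by simp [h] at hz₁
    have hz₂0 : z₂ ≠ 0 := fun h => by simp [h] at hz₂
    have hz₃0 : z₃ ≠ 0 := fun h => by simp [h] at hz₃
    have h₁ : z₁ = 1 ∨ z₁ * z₂ ^ a₂ * z₃ ^ a₃ = 1 := by
      rcases eq_or_ne p₁ 0 with hp | hp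
      · right
        have hq : q₁ ≠ 0 := by intro h; rw [hp, h] at hs₁; simp at hs₁
        exact mul_right_cancel₀ hq (by rw [E2, one_mul])
      · left
        exact mul_right_cancel₀ hp (by rw [E1, one_mul])
    have h₂ : z₂ = 1 ∨ z₁ ^ b₁ * z₂ * z₃ ^ b₃ = 1 := by
      rcases eq_or_ne p₂ 0 with hp | hp
      · right
        have hq : q₂ ≠ 0 := by intro h; rw [hp, h] at hs₂; simp at hs₂
        exact mul_right_cancel₀ hq (by rw [E4, one_mul])
      · left
        exact mul_right_cancel₀ hp (by rw [E3, one_mul])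
    have h₃ : z₃ = 1 ∨ z₁ ^ c₁ * z₂ ^ c₂ * z₃ = 1 := by
      rcases eq_or_ne p₃ 0 with hp | hp
      · right
        have hq : q₃ ≠ 0 := by intro h; rw [hp, h] at hs₃; simp at hs₃
        exact mul_right_cancel₀ hq (by rw [E6, one_mul])
      · left
        exact mul_right_cancel₀ hp (by rw [E5, one_mul])
    rcases h₁ with hA | hA <;> rcases h₂ with hB | hB <;> rcases h₃ with hC | hC
    · exact ⟨hA, hB, hC⟩
    · rw [hA, hB] at hC
      simp only [one_zpow, one_mul] at hC
      exact ⟨hA, hB, hC⟩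
    · rw [hA, hC] at hB
      simp only [one_zpow, one_mul, mul_one] at hB
      exact ⟨hA, hB, hC⟩
    · rw [hA] at hB hC
      simp only [one_zpow, one_mul] at hB hC
      obtain ⟨h5, h6⟩ := solve2 z₂ z₃ hz₂0 hz₃0 b₃ c₂ m0 hB hC
      exact ⟨hA, h5, h6⟩
    · rw [hB, hC] at hA
      simp only [one_zpow, mul_one] at hA
      exact ⟨hA, hB, hC⟩
    · rw [hB] at hA hC
      simp only [one_zpow, one_mul, mul_one] at hA hC
      obtain ⟨h5, h6⟩ := solve2 z₁ z₃ hz₁0 hz₃0 a₃ c₁ m1 hA hC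
      exact ⟨h5, hB, h6⟩
    · rw [hC] at hA hB
      simp only [one_zpow, one_mul, mul_one] at hA hB
      obtain ⟨h5, h6⟩ := solve2 z₁ z₂ hz₁0 hz₂0 a₂ b₁ m2 hA hB
      exact ⟨h5, h6, hC⟩
    · exact solve3 z₁ z₂ z₃ hz₁0 hz₂0 hz₃0 a₂ a₃ b₁ b₃ c₁ c₂ hd m0 hA hB hC
end

section
/- Let a,b,c,d,e,f,g,h,i,j be integers with gcd(a,b,e,g,i) = 1 and gcd(c,d,f,h,j) = 1. The action of T² = (S¹)² on (S³)³ ⊂ (ℂ²)³ given by (z,w)·(p,q,r) = ((zᵃp₁, zᵇw^c p₂), (w^d q₁, z^e w^f q₂), (z^g w^h r₁, z^i w^j r₂)) is free if and only if all of the following gcds equal 1: gcd(a,d), gcd(ab, gi), gcd(df, hj), gcd(a, eh−gf), gcd(a, ej−if), gcd(d, bh−cg), gcd(d, bj−ic), gcd(bf−ec, bh−gc, eh−fg), and gcd(bf−ec, bj−ic, ej−if). -/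
private lemma gcd_prime_dvd {x y : ℤ} (hxy : Int.gcd x y ≠ 1) :
    ∃ p : ℕ, p.Prime ∧ (p:ℤ) ∣ x ∧ (p:ℤ) ∣ y := by
  obtain ⟨p, hp, hdvd⟩ := Nat.exists_prime_and_dvd hxy
  exact ⟨p, hp, (Int.natCast_dvd_natCast.mpr hdvd).trans (Int.gcd_dvd_left x y),
    (Int.natCast_dvd_natCast.mpr hdvd).trans (Int.gcd_dvd_right x y)⟩

private lemma gcd3_prime_dvd {x y z : ℤ} (h : Int.gcd x (Int.gcd y z) ≠ 1) :
    ∃ p : ℕ, p.Prime ∧ (p:ℤ) ∣ x ∧ (p:ℤ) ∣ y ∧ (p:ℤ) ∣ z := by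
  obtain ⟨p, hp, hx, hg⟩ := gcd_prime_dvd h
  refine ⟨p, hp, hx, ?_, ?_⟩
  · exact dvd_trans hg (by exact_mod_cast (Int.gcd_dvd_left y z : (↑(Int.gcd y z):ℤ) ∣ y))
  · exact dvd_trans hg (by exact_mod_cast (Int.gcd_dvd_right y z : (↑(Int.gcd y z):ℤ) ∣ z))

private lemma not_dvd_both {p : ℕ} (hp : p.Prime) {x y : ℤ} (hxy : Int.gcd x y = 1)
    (hx : (p:ℤ) ∣ x) (hy : (p:ℤ) ∣ y) : False := by
  have h := Int.dvd_coe_gcd hx hy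
  rw [hxy] at h
  have : p ∣ 1 := by exact_mod_cast h
  exact hp.one_lt.ne' (Nat.dvd_one.mp this)

private lemma not_dvd_both3 {p : ℕ} (hp : p.Prime) {x y z : ℤ}
    (h : Int.gcd x (Int.gcd y z) = 1) (hx : (p:ℤ) ∣ x) (hy : (p:ℤ) ∣ y) (hz : (p:ℤ) ∣ z) :
    False :=
  not_dvd_both hp h hx (Int.dvd_coe_gcd hy hz)

private lemma zpow_gcd_eq_one {z : ℂ} (hz : z ≠ 0) {s t : ℤ} (hs : z ^ s = 1) (ht : z ^ t = 1) :
    z ^ (Int.gcd s t : ℤ) = 1 := by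
  rw [Int.gcd_eq_gcd_ab s t, zpow_add₀ hz, zpow_mul, zpow_mul, hs, ht, one_zpow, one_zpow,
    one_mul]

private lemma char_minor {z w : ℂ} (hz : z ≠ 0) (hw : w ≠ 0) {m n m' n' : ℤ}
    (h : z ^ m * w ^ n = 1) (h' : z ^ m' * w ^ n' = 1) :
    z ^ (m * n' - m' * n) = 1 ∧ w ^ (m * n' - m' * n) = 1 := by
  constructor
  · have e1 : z ^ (m * n') * w ^ (n * n') = 1 := by
      rw [zpow_mul, zpow_mul, ← mul_zpow, h, one_zpow]
    have e2 : z ^ (m' * n) * w ^ (n * n') = 1 := by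
      rw [mul_comm n n', zpow_mul, zpow_mul, ← mul_zpow, h', one_zpow]
    have key : z ^ (m * n') = z ^ (m' * n) :=
      mul_right_cancel₀ (zpow_ne_zero _ hw) (e1.trans e2.symm)
    rw [zpow_sub₀ hz, key, div_self (zpow_ne_zero _ hz)]
  · have e1 : z ^ (m * m') * w ^ (n * m') = 1 := by
      rw [zpow_mul, zpow_mul, ← mul_zpow, h, one_zpow]
    have e2 : z ^ (m * m') * w ^ (n' * m) = 1 := by
      rw [mul_comm m m', zpow_mul, zpow_mul, ← mul_zpow, h', one_zpow]
    have key : w ^ (n * m') = w ^ (n' * m) :=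
      mul_left_cancel₀ (zpow_ne_zero _ hz) (e1.trans e2.symm)
    rw [zpow_sub₀ hw, mul_comm m n', mul_comm m' n, ← key, div_self (zpow_ne_zero _ hw)]
private lemma int_gcd_neg_right (x y : ℤ) : Int.gcd x (-y) = Int.gcd x y := by
  simp [Int.gcd, Int.natAbs_neg]
private lemma pivot_counterexample (p : ℕ) (hp : p.Prime) (m n m₁ n₁ m₂ n₂ m₃ n₃ : ℤ)
    (hmn : ¬((p:ℤ) ∣ m ∧ (p:ℤ) ∣ n))
    (d1 : (p:ℤ) ∣ m * n₁ - m₁ * n) (d2 : (p:ℤ) ∣ m * n₂ - m₂ * n)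
    (d3 : (p:ℤ) ∣ m * n₃ - m₃ * n) :
    ∃ z w : ℂ, ‖z‖ = 1 ∧ ‖w‖ = 1 ∧ ¬(z = 1 ∧ w = 1) ∧
      z ^ m₁ * w ^ n₁ = 1 ∧ z ^ m₂ * w ^ n₂ = 1 ∧ z ^ m₃ * w ^ n₃ = 1 := by
  set ζ : ℂ := Complex.exp (2 * Real.pi * Complex.I / p) with hζ
  have hprim : IsPrimitiveRoot ζ p := Complex.isPrimitiveRoot_exp p hp.ne_zero
  have hζ0 : ζ ≠ 0 := Complex.exp_ne_zero _
  have habs : ‖ζ‖ = 1 := by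
    rw [hζ, show (2 * Real.pi * Complex.I / p : ℂ) = ((2 * Real.pi / p : ℝ) : ℂ) * Complex.I by
      push_cast; ring]
    exact Complex.norm_exp_ofReal_mul_I _
  have key : ∀ mk nk : ℤ, (p:ℤ) ∣ m * nk - mk * n → (ζ ^ (-n)) ^ mk * (ζ ^ m) ^ nk = 1 := by
    intro mk nk hd
    rw [← zpow_mul, ← zpow_mul, ← zpow_add₀ hζ0]
    refine (hprim.zpow_eq_one_iff_dvd _).mpr ?_
    have : -n * mk + m * nk = m * nk - mk * n := by ring
    rw [this]; exact hd
  refine ⟨ζ ^ (-n), ζ ^ m, ?_, ?_, ?_, key m₁ n₁ d1, key m₂ n₂ d2, key m₃ n₃ d3⟩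
  · rw [norm_zpow, habs, one_zpow]
  · rw [norm_zpow, habs, one_zpow]
  · rintro ⟨hz1, hw1⟩
    refine hmn ⟨?_, ?_⟩
    · exact (hprim.zpow_eq_one_iff_dvd m).mp hw1
    · have := (hprim.zpow_eq_one_iff_dvd (-n)).mp hz1
      exact (dvd_neg).mp this

private lemma triple_free (m₁ n₁ m₂ n₂ m₃ n₃ : ℤ) :
    (∀ z w : ℂ, ‖z‖ = 1 → ‖w‖ = 1 →
       z ^ m₁ * w ^ n₁ = 1 → z ^ m₂ * w ^ n₂ = 1 → z ^ m₃ * w ^ n₃ = 1 → z = 1 ∧ w = 1)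
    ↔ Int.gcd (m₁ * n₂ - m₂ * n₁) (Int.gcd (m₁ * n₃ - m₃ * n₁) (m₂ * n₃ - m₃ * n₂)) = 1 := by
  constructor
  · intro H
    by_contra hg
    obtain ⟨p, hp, D12, D13, D23⟩ := gcd3_prime_dvd hg
    have hcons : ∃ z w : ℂ, ‖z‖ = 1 ∧ ‖w‖ = 1 ∧ ¬(z = 1 ∧ w = 1) ∧
        z ^ m₁ * w ^ n₁ = 1 ∧ z ^ m₂ * w ^ n₂ = 1 ∧ z ^ m₃ * w ^ n₃ = 1 := by
      by_cases h1 : ¬((p:ℤ) ∣ m₁ ∧ (p:ℤ) ∣ n₁)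
      · refine pivot_counterexample p hp m₁ n₁ _ _ _ _ _ _ h1 (by simp) ?_ ?_
        · exact D12
        · exact D13
      by_cases h2 : ¬((p:ℤ) ∣ m₂ ∧ (p:ℤ) ∣ n₂)
      · refine pivot_counterexample p hp m₂ n₂ _ _ _ _ _ _ h2 ?_ (by simp) ?_
        · have : m₂ * n₁ - m₁ * n₂ = -(m₁ * n₂ - m₂ * n₁) := by ring
          rw [this]; exact D12.neg_right
        · exact D23
      by_cases h3 : ¬((p:ℤ) ∣ m₃ ∧ (p:ℤ) ∣ n₃)
      · refine pivot_counterexample p hp m₃ n₃ _ _ _ _ _ _ h3 ?_ ?_ (by simp)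
        · have : m₃ * n₁ - m₁ * n₃ = -(m₁ * n₃ - m₃ * n₁) := by ring
          rw [this]; exact D13.neg_right
        · have : m₃ * n₂ - m₂ * n₃ = -(m₂ * n₃ - m₃ * n₂) := by ring
          rw [this]; exact D23.neg_right
      push_neg at h1 h2 h3
      have hmn : ¬((p:ℤ) ∣ 0 ∧ (p:ℤ) ∣ 1) := by
        rintro ⟨-, hd⟩
        have : p ∣ 1 := by exact_mod_cast hd
        exact hp.one_lt.ne' (Nat.dvd_one.mp this)
      refine pivot_counterexample p hp 0 1 _ _ _ _ _ _ hmn ?_ ?_ ?_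
      · have : (0:ℤ) * n₁ - m₁ * 1 = -m₁ := by ring
        rw [this]; exact h1.1.neg_right
      · have : (0:ℤ) * n₂ - m₂ * 1 = -m₂ := by ring
        rw [this]; exact h2.1.neg_right
      · have : (0:ℤ) * n₃ - m₃ * 1 = -m₃ := by ring
        rw [this]; exact h3.1.neg_right
    obtain ⟨z, w, hz, hw, hnt, e1, e2, e3⟩ := hcons
    exact hnt (H z w hz hw e1 e2 e3)
  · intro hg z w hz hw e1 e2 e3
    have hz0 : z ≠ 0 := by intro h; rw [h] at hz; simp at hz
    have hw0 : w ≠ 0 := by intro h; rw [h] at hw; simp at hw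
    obtain ⟨z12, w12⟩ := char_minor hz0 hw0 e1 e2
    obtain ⟨z13, w13⟩ := char_minor hz0 hw0 e1 e3
    obtain ⟨z23, w23⟩ := char_minor hz0 hw0 e2 e3
    have hzg : z ^ ((Int.gcd (m₁ * n₂ - m₂ * n₁)
        (Int.gcd (m₁ * n₃ - m₃ * n₁) (m₂ * n₃ - m₃ * n₂)) : ℕ) : ℤ) = 1 :=
      zpow_gcd_eq_one hz0 z12 (by exact_mod_cast zpow_gcd_eq_one hz0 z13 z23)
    have hwg : w ^ ((Int.gcd (m₁ * n₂ - m₂ * n₁)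
        (Int.gcd (m₁ * n₃ - m₃ * n₁) (m₂ * n₃ - m₃ * n₂)) : ℕ) : ℤ) = 1 :=
      zpow_gcd_eq_one hw0 w12 (by exact_mod_cast zpow_gcd_eq_one hw0 w13 w23)
    rw [hg] at hzg hwg
    simpa using And.intro hzg hwg
private lemma sphere_ne {u v : ℂ} (h : ‖u‖ ^ 2 + ‖v‖ ^ 2 = 1) :
    u ≠ 0 ∨ v ≠ 0 := by
  by_contra hc
  push_neg at hc
  rw [hc.1, hc.2] at h
  simp at h

private lemma cancel_char {x y : ℂ} (h : x * y = y) (hy : y ≠ 0) : x = 1 :=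
  mul_right_cancel₀ hy (by rw [one_mul]; exact h)

/-- Freeness criterion for the linear `T²` action on `(S³)³` defining 7-dimensional
biquotients `(S³)³ ⫽ T²`. -/
theorem stmt_13 (a b c d e f g h i j : ℤ)
    (h1 : Int.gcd a (Int.gcd b (Int.gcd e (Int.gcd g i))) = 1)
    (h2 : Int.gcd c (Int.gcd d (Int.gcd f (Int.gcd h j))) = 1) :
    (∀ z w : ℂ, ‖z‖ = 1 → ‖w‖ = 1 →
      ∀ p₁ p₂ q₁ q₂ r₁ r₂ : ℂ,
        ‖p₁‖ ^ 2 + ‖p₂‖ ^ 2 = 1 →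
        ‖q₁‖ ^ 2 + ‖q₂‖ ^ 2 = 1 →
        ‖r₁‖ ^ 2 + ‖r₂‖ ^ 2 = 1 →
        (z ^ a * p₁ = p₁ ∧ z ^ b * w ^ c * p₂ = p₂ ∧
         w ^ d * q₁ = q₁ ∧ z ^ e * w ^ f * q₂ = q₂ ∧
         z ^ g * w ^ h * r₁ = r₁ ∧ z ^ i * w ^ j * r₂ = r₂) →
        z = 1 ∧ w = 1) ↔
    (Int.gcd a d = 1 ∧ Int.gcd (a * b) (g * i) = 1 ∧ Int.gcd (d * f) (h * j) = 1 ∧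
     Int.gcd a (e * h - g * f) = 1 ∧ Int.gcd a (e * j - i * f) = 1 ∧
     Int.gcd d (b * h - c * g) = 1 ∧ Int.gcd d (b * j - i * c) = 1 ∧
     Int.gcd (b * f - e * c) (Int.gcd (b * h - g * c) (e * h - f * g)) = 1 ∧
     Int.gcd (b * f - e * c) (Int.gcd (b * j - i * c) (e * j - i * f)) = 1) := by
  clear h1 h2
  -- Step 1: reformulate the fixed-point condition as a pure character condition.
  have step1 : (∀ z w : ℂ, ‖z‖ = 1 → ‖w‖ = 1 →
      ∀ p₁ p₂ q₁ q₂ r₁ r₂ : ℂ,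
        ‖p₁‖ ^ 2 + ‖p₂‖ ^ 2 = 1 →
        ‖q₁‖ ^ 2 + ‖q₂‖ ^ 2 = 1 →
        ‖r₁‖ ^ 2 + ‖r₂‖ ^ 2 = 1 →
        (z ^ a * p₁ = p₁ ∧ z ^ b * w ^ c * p₂ = p₂ ∧
         w ^ d * q₁ = q₁ ∧ z ^ e * w ^ f * q₂ = q₂ ∧
         z ^ g * w ^ h * r₁ = r₁ ∧ z ^ i * w ^ j * r₂ = r₂) →
        z = 1 ∧ w = 1) ↔
      (∀ z w : ℂ, ‖z‖ = 1 → ‖w‖ = 1 →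
        (z ^ a = 1 ∨ z ^ b * w ^ c = 1) → (w ^ d = 1 ∨ z ^ e * w ^ f = 1) →
        (z ^ g * w ^ h = 1 ∨ z ^ i * w ^ j = 1) → z = 1 ∧ w = 1) := by
    constructor
    · intro H z w hz hw f1 f2 f3
      obtain ⟨p₁, p₂, s1, e1, e2⟩ : ∃ p₁ p₂ : ℂ,
          ‖p₁‖ ^ 2 + ‖p₂‖ ^ 2 = 1 ∧ z ^ a * p₁ = p₁ ∧
            z ^ b * w ^ c * p₂ = p₂ := by
        rcases f1 with hx | hx
        · exact ⟨1, 0, by simp, by simp [hx], by simp⟩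
        · exact ⟨0, 1, by simp, by simp, by simp [hx]⟩
      obtain ⟨q₁, q₂, s2, e3, e4⟩ : ∃ q₁ q₂ : ℂ,
          ‖q₁‖ ^ 2 + ‖q₂‖ ^ 2 = 1 ∧ w ^ d * q₁ = q₁ ∧
            z ^ e * w ^ f * q₂ = q₂ := by
        rcases f2 with hx | hx
        · exact ⟨1, 0, by simp, by simp [hx], by simp⟩
        · exact ⟨0, 1, by simp, by simp, by simp [hx]⟩
      obtain ⟨r₁, r₂, s3, e5, e6⟩ : ∃ r₁ r₂ : ℂ,
          ‖r₁‖ ^ 2 + ‖r₂‖ ^ 2 = 1 ∧ z ^ g * w ^ h * r₁ = r₁ ∧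
            z ^ i * w ^ j * r₂ = r₂ := by
        rcases f3 with hx | hx
        · exact ⟨1, 0, by simp, by simp [hx], by simp⟩
        · exact ⟨0, 1, by simp, by simp, by simp [hx]⟩
      exact H z w hz hw p₁ p₂ q₁ q₂ r₁ r₂ s1 s2 s3 ⟨e1, e2, e3, e4, e5, e6⟩
    · rintro H z w hz hw p₁ p₂ q₁ q₂ r₁ r₂ s1 s2 s3 ⟨e1, e2, e3, e4, e5, e6⟩
      apply H z w hz hw
      · rcases sphere_ne s1 with hx | hx
        · exact Or.inl (cancel_char e1 hx)
        · exact Or.inr (cancel_char e2 hx)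
      · rcases sphere_ne s2 with hx | hx
        · exact Or.inl (cancel_char e3 hx)
        · exact Or.inr (cancel_char e4 hx)
      · rcases sphere_ne s3 with hx | hx
        · exact Or.inl (cancel_char e5 hx)
        · exact Or.inr (cancel_char e6 hx)
  rw [step1]
  -- the eight "triple" conditions
  have t1 : (∀ z w : ℂ, ‖z‖ = 1 → ‖w‖ = 1 →
      z ^ a * w ^ (0:ℤ) = 1 → z ^ (0:ℤ) * w ^ d = 1 → z ^ g * w ^ h = 1 → z = 1 ∧ w = 1) ↔
      Int.gcd (a * d) (Int.gcd (a * h) (g * d)) = 1 := by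
    rw [triple_free a 0 0 d g h, show a * d - 0 * 0 = a * d from by ring,
      show a * h - g * 0 = a * h from by ring,
      show (0:ℤ) * h - g * d = -(g * d) from by ring, int_gcd_neg_right]
  have t2 : (∀ z w : ℂ, ‖z‖ = 1 → ‖w‖ = 1 →
      z ^ a * w ^ (0:ℤ) = 1 → z ^ (0:ℤ) * w ^ d = 1 → z ^ i * w ^ j = 1 → z = 1 ∧ w = 1) ↔
      Int.gcd (a * d) (Int.gcd (a * j) (i * d)) = 1 := by
    rw [triple_free a 0 0 d i j, show a * d - 0 * 0 = a * d from by ring,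
      show a * j - i * 0 = a * j from by ring,
      show (0:ℤ) * j - i * d = -(i * d) from by ring, int_gcd_neg_right]
  have t3 : (∀ z w : ℂ, ‖z‖ = 1 → ‖w‖ = 1 →
      z ^ a * w ^ (0:ℤ) = 1 → z ^ e * w ^ f = 1 → z ^ g * w ^ h = 1 → z = 1 ∧ w = 1) ↔
      Int.gcd (a * f) (Int.gcd (a * h) (e * h - g * f)) = 1 := by
    rw [triple_free a 0 e f g h, show a * f - e * 0 = a * f from by ring,
      show a * h - g * 0 = a * h from by ring]
  have t4 : (∀ z w : ℂ, ‖z‖ = 1 → ‖w‖ = 1 →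
      z ^ a * w ^ (0:ℤ) = 1 → z ^ e * w ^ f = 1 → z ^ i * w ^ j = 1 → z = 1 ∧ w = 1) ↔
      Int.gcd (a * f) (Int.gcd (a * j) (e * j - i * f)) = 1 := by
    rw [triple_free a 0 e f i j, show a * f - e * 0 = a * f from by ring,
      show a * j - i * 0 = a * j from by ring]
  have t5 : (∀ z w : ℂ, ‖z‖ = 1 → ‖w‖ = 1 →
      z ^ b * w ^ c = 1 → z ^ (0:ℤ) * w ^ d = 1 → z ^ g * w ^ h = 1 → z = 1 ∧ w = 1) ↔
      Int.gcd (b * d) (Int.gcd (b * h - g * c) (g * d)) = 1 := by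
    rw [triple_free b c 0 d g h, show b * d - 0 * c = b * d from by ring,
      show (0:ℤ) * h - g * d = -(g * d) from by ring, int_gcd_neg_right]
  have t6 : (∀ z w : ℂ, ‖z‖ = 1 → ‖w‖ = 1 →
      z ^ b * w ^ c = 1 → z ^ (0:ℤ) * w ^ d = 1 → z ^ i * w ^ j = 1 → z = 1 ∧ w = 1) ↔
      Int.gcd (b * d) (Int.gcd (b * j - i * c) (i * d)) = 1 := by
    rw [triple_free b c 0 d i j, show b * d - 0 * c = b * d from by ring,
      show (0:ℤ) * j - i * d = -(i * d) from by ring, int_gcd_neg_right]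
  have t7 : (∀ z w : ℂ, ‖z‖ = 1 → ‖w‖ = 1 →
      z ^ b * w ^ c = 1 → z ^ e * w ^ f = 1 → z ^ g * w ^ h = 1 → z = 1 ∧ w = 1) ↔
      Int.gcd (b * f - e * c) (Int.gcd (b * h - g * c) (e * h - f * g)) = 1 := by
    rw [triple_free b c e f g h, show e * h - g * f = e * h - f * g from by ring]
  have t8 : (∀ z w : ℂ, ‖z‖ = 1 → ‖w‖ = 1 →
      z ^ b * w ^ c = 1 → z ^ e * w ^ f = 1 → z ^ i * w ^ j = 1 → z = 1 ∧ w = 1) ↔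
      Int.gcd (b * f - e * c) (Int.gcd (b * j - i * c) (e * j - i * f)) = 1 :=
    triple_free b c e f i j
  -- Step 2: the character condition is equivalent to the eight gcd conditions.
  have step2 : (∀ z w : ℂ, ‖z‖ = 1 → ‖w‖ = 1 →
      (z ^ a = 1 ∨ z ^ b * w ^ c = 1) → (w ^ d = 1 ∨ z ^ e * w ^ f = 1) →
      (z ^ g * w ^ h = 1 ∨ z ^ i * w ^ j = 1) → z = 1 ∧ w = 1) ↔
      (Int.gcd (a * d) (Int.gcd (a * h) (g * d)) = 1 ∧
       Int.gcd (a * d) (Int.gcd (a * j) (i * d)) = 1 ∧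
       Int.gcd (a * f) (Int.gcd (a * h) (e * h - g * f)) = 1 ∧
       Int.gcd (a * f) (Int.gcd (a * j) (e * j - i * f)) = 1 ∧
       Int.gcd (b * d) (Int.gcd (b * h - g * c) (g * d)) = 1 ∧
       Int.gcd (b * d) (Int.gcd (b * j - i * c) (i * d)) = 1 ∧
       Int.gcd (b * f - e * c) (Int.gcd (b * h - g * c) (e * h - f * g)) = 1 ∧
       Int.gcd (b * f - e * c) (Int.gcd (b * j - i * c) (e * j - i * f)) = 1) := by
    constructor
    · intro H
      refine ⟨t1.mp ?_, t2.mp ?_, t3.mp ?_, t4.mp ?_, t5.mp ?_, t6.mp ?_, t7.mp ?_, t8.mp ?_⟩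
      · exact fun z w hz hw c1 c2 c3 =>
          H z w hz hw (Or.inl (by simpa using c1)) (Or.inl (by simpa using c2)) (Or.inl c3)
      · exact fun z w hz hw c1 c2 c3 =>
          H z w hz hw (Or.inl (by simpa using c1)) (Or.inl (by simpa using c2)) (Or.inr c3)
      · exact fun z w hz hw c1 c2 c3 =>
          H z w hz hw (Or.inl (by simpa using c1)) (Or.inr c2) (Or.inl c3)
      · exact fun z w hz hw c1 c2 c3 =>
          H z w hz hw (Or.inl (by simpa using c1)) (Or.inr c2) (Or.inr c3)
      · exact fun z w hz hw c1 c2 c3 =>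
          H z w hz hw (Or.inr c1) (Or.inl (by simpa using c2)) (Or.inl c3)
      · exact fun z w hz hw c1 c2 c3 =>
          H z w hz hw (Or.inr c1) (Or.inl (by simpa using c2)) (Or.inr c3)
      · exact fun z w hz hw c1 c2 c3 =>
          H z w hz hw (Or.inr c1) (Or.inr c2) (Or.inl c3)
      · exact fun z w hz hw c1 c2 c3 =>
          H z w hz hw (Or.inr c1) (Or.inr c2) (Or.inr c3)
    · rintro ⟨G1, G2, G3, G4, G5, G6, G7, G8⟩ z w hz hw d1 d2 d3
      rcases d1 with x1 | x1 <;> rcases d2 with x2 | x2 <;> rcases d3 with x3 | x3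
      · exact t1.mpr G1 z w hz hw (by simpa using x1) (by simpa using x2) x3
      · exact t2.mpr G2 z w hz hw (by simpa using x1) (by simpa using x2) x3
      · exact t3.mpr G3 z w hz hw (by simpa using x1) x2 x3
      · exact t4.mpr G4 z w hz hw (by simpa using x1) x2 x3
      · exact t5.mpr G5 z w hz hw x1 (by simpa using x2) x3
      · exact t6.mpr G6 z w hz hw x1 (by simpa using x2) x3
      · exact t7.mpr G7 z w hz hw x1 x2 x3
      · exact t8.mpr G8 z w hz hw x1 x2 x3
  rw [step2]
  -- Step 3: pure number theory.
  constructor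
  · rintro ⟨G1, G2, G3, G4, G5, G6, G7, G8⟩
    refine ⟨?_, ?_, ?_, ?_, ?_, ?_, ?_, G7, G8⟩
    · by_contra hr
      obtain ⟨p, hp, ha, hd⟩ := gcd_prime_dvd hr
      exact not_dvd_both3 hp G1 (ha.mul_right d) (ha.mul_right h) (hd.mul_left g)
    · by_contra hr
      obtain ⟨p, hp, hab, hgi⟩ := gcd_prime_dvd hr
      have hpz : Prime (p:ℤ) := Int.prime_iff_natAbs_prime.mpr (by simpa)
      rcases hpz.dvd_mul.mp hab with ha | hb <;> rcases hpz.dvd_mul.mp hgi with hg | hi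
      · exact not_dvd_both3 hp G1 (ha.mul_right d) (ha.mul_right h) (hg.mul_right d)
      · exact not_dvd_both3 hp G2 (ha.mul_right d) (ha.mul_right j) (hi.mul_right d)
      · exact not_dvd_both3 hp G5 (hb.mul_right d)
          (dvd_sub (hb.mul_right h) (hg.mul_right c)) (hg.mul_right d)
      · exact not_dvd_both3 hp G6 (hb.mul_right d)
          (dvd_sub (hb.mul_right j) (hi.mul_right c)) (hi.mul_right d)
    · by_contra hr
      obtain ⟨p, hp, hdf, hhj⟩ := gcd_prime_dvd hr
      have hpz : Prime (p:ℤ) := Int.prime_iff_natAbs_prime.mpr (by simpa)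
      rcases hpz.dvd_mul.mp hdf with hd | hf <;> rcases hpz.dvd_mul.mp hhj with hh | hj
      · exact not_dvd_both3 hp G1 (hd.mul_left a) (hh.mul_left a) (hd.mul_left g)
      · exact not_dvd_both3 hp G2 (hd.mul_left a) (hj.mul_left a) (hd.mul_left i)
      · exact not_dvd_both3 hp G3 (hf.mul_left a) (hh.mul_left a)
          (dvd_sub (hh.mul_left e) (hf.mul_left g))
      · exact not_dvd_both3 hp G4 (hf.mul_left a) (hj.mul_left a)
          (dvd_sub (hj.mul_left e) (hf.mul_left i))
    · by_contra hr
      obtain ⟨p, hp, ha, hm⟩ := gcd_prime_dvd hr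
      exact not_dvd_both3 hp G3 (ha.mul_right f) (ha.mul_right h) hm
    · by_contra hr
      obtain ⟨p, hp, ha, hm⟩ := gcd_prime_dvd hr
      exact not_dvd_both3 hp G4 (ha.mul_right f) (ha.mul_right j) hm
    · by_contra hr
      obtain ⟨p, hp, hd, hm⟩ := gcd_prime_dvd hr
      have hm' : (p:ℤ) ∣ b * h - g * c := by
        rw [show b * h - g * c = b * h - c * g from by ring]; exact hm
      exact not_dvd_both3 hp G5 (hd.mul_left b) hm' (hd.mul_left g)
    · by_contra hr
      obtain ⟨p, hp, hd, hm⟩ := gcd_prime_dvd hr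
      exact not_dvd_both3 hp G6 (hd.mul_left b) hm (hd.mul_left i)
  · rintro ⟨R1, R2, R3, R4, R5, R6, R7, R8, R9⟩
    refine ⟨?_, ?_, ?_, ?_, ?_, ?_, R8, R9⟩
    · by_contra hr
      obtain ⟨p, hp, k1, k2, k3⟩ := gcd3_prime_dvd hr
      have hpz : Prime (p:ℤ) := Int.prime_iff_natAbs_prime.mpr (by simpa)
      rcases hpz.dvd_mul.mp k1 with ha | hd
      · rcases hpz.dvd_mul.mp k3 with hg | hd
        · exact not_dvd_both hp R2 (ha.mul_right b) (hg.mul_right i)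
        · exact not_dvd_both hp R1 ha hd
      · rcases hpz.dvd_mul.mp k2 with ha | hh
        · exact not_dvd_both hp R1 ha hd
        · exact not_dvd_both hp R3 (hd.mul_right f) (hh.mul_right j)
    · by_contra hr
      obtain ⟨p, hp, k1, k2, k3⟩ := gcd3_prime_dvd hr
      have hpz : Prime (p:ℤ) := Int.prime_iff_natAbs_prime.mpr (by simpa)
      rcases hpz.dvd_mul.mp k1 with ha | hd
      · rcases hpz.dvd_mul.mp k3 with hi | hd
        · exact not_dvd_both hp R2 (ha.mul_right b) (hi.mul_left g)
        · exact not_dvd_both hp R1 ha hd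
      · rcases hpz.dvd_mul.mp k2 with ha | hj
        · exact not_dvd_both hp R1 ha hd
        · exact not_dvd_both hp R3 (hd.mul_right f) (hj.mul_left h)
    · by_contra hr
      obtain ⟨p, hp, k1, k2, k3⟩ := gcd3_prime_dvd hr
      have hpz : Prime (p:ℤ) := Int.prime_iff_natAbs_prime.mpr (by simpa)
      rcases hpz.dvd_mul.mp k1 with ha | hf
      · exact not_dvd_both hp R4 ha k3
      · rcases hpz.dvd_mul.mp k2 with ha | hh
        · exact not_dvd_both hp R4 ha k3
        · exact not_dvd_both hp R3 (hf.mul_left d) (hh.mul_right j)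
    · by_contra hr
      obtain ⟨p, hp, k1, k2, k3⟩ := gcd3_prime_dvd hr
      have hpz : Prime (p:ℤ) := Int.prime_iff_natAbs_prime.mpr (by simpa)
      rcases hpz.dvd_mul.mp k1 with ha | hf
      · exact not_dvd_both hp R5 ha k3
      · rcases hpz.dvd_mul.mp k2 with ha | hj
        · exact not_dvd_both hp R5 ha k3
        · exact not_dvd_both hp R3 (hf.mul_left d) (hj.mul_left h)
    · by_contra hr
      obtain ⟨p, hp, k1, k2, k3⟩ := gcd3_prime_dvd hr
      have hpz : Prime (p:ℤ) := Int.prime_iff_natAbs_prime.mpr (by simpa)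
      have hm : (p:ℤ) ∣ b * h - c * g := by
        rw [show b * h - c * g = b * h - g * c from by ring]; exact k2
      rcases hpz.dvd_mul.mp k1 with hb | hd
      · rcases hpz.dvd_mul.mp k3 with hg | hd
        · exact not_dvd_both hp R2 (hb.mul_left a) (hg.mul_right i)
        · exact not_dvd_both hp R6 hd hm
      · exact not_dvd_both hp R6 hd hm
    · by_contra hr
      obtain ⟨p, hp, k1, k2, k3⟩ := gcd3_prime_dvd hr
      have hpz : Prime (p:ℤ) := Int.prime_iff_natAbs_prime.mpr (by simpa)
      rcases hpz.dvd_mul.mp k1 with hb | hd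
      · rcases hpz.dvd_mul.mp k3 with hi | hd
        · exact not_dvd_both hp R2 (hb.mul_left a) (hi.mul_left g)
        · exact not_dvd_both hp R7 hd k2
      · exact not_dvd_both hp R7 hd k2
end
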